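/- arXiv:2102.01137 — 5 statements merged into one kernel-verified Lean document; each statement's English description precedes it below -/
import Mathlib

section
/- Let μ ≥ 0 and k ∈ [0,1). The function ρ is positive on [1,∞), and there exists a constant C₁ > 0 such that for all t ≥ 1: C₁^{−1} t^{(k+μ)/2} exp(−φ_k(t)) ≤ ρ(t) ≤ C₁ t^{(k+μ)/2} exp(−φ_k(t)). -/
open MeasureTheory Real Set

/-- Modified Bessel function of the second kind,
`K_ν(t) = ∫₀^∞ exp(−t cosh ζ) cosh(νζ) dζ`. -/
noncomputable def besselK (ν : ℝ) (t : ℝ) : ℝ :=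
  ∫ ζ in Set.Ioi (0:ℝ), Real.exp (-t * Real.cosh ζ) * Real.cosh (ν * ζ)

/-- `φ_k(t) = t^{1−k}/(1−k)`. -/
noncomputable def phik (k t : ℝ) : ℝ := t ^ (1 - k) / (1 - k)

/-- `ρ(t) = t^{(1+μ)/2} K_{(μ−1)/(2(1−k))}(φ_k(t))`. -/
noncomputable def rho (μ k t : ℝ) : ℝ :=
  t ^ ((1 + μ) / 2) * besselK ((μ - 1) / (2 * (1 - k))) (phik k t)

/-- `φ(x) = ∫_{S^{N-1}} e^{x·ω} dσ(ω)`, integral over the unit sphere with respect to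
the surface measure. -/
noncomputable def sphInt (N : ℕ) (x : EuclideanSpace ℝ (Fin N)) : ℝ :=
  ∫ ω : Metric.sphere (0 : EuclideanSpace ℝ (Fin N)) 1,
    Real.exp ((inner ℝ x (ω : EuclideanSpace ℝ (Fin N)) : ℝ))
    ∂((volume : Measure (EuclideanSpace ℝ (Fin N))).toSphere)

/-- `ψ(x,t) = φ(x) ρ(t)`. -/
noncomputable def psiF (N : ℕ) (μ k : ℝ) (x : EuclideanSpace ℝ (Fin N)) (t : ℝ) : ℝ :=
  sphInt N x * rho μ k t

/-- The Laplacian (in the `x` variables) as the sum of second directional derivatives. -/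
noncomputable def lapl (N : ℕ) (f : EuclideanSpace ℝ (Fin N) → ℝ)
    (x : EuclideanSpace ℝ (Fin N)) : ℝ :=
  ∑ i : Fin N,
    fderiv ℝ (fun y => fderiv ℝ f y (EuclideanSpace.single i 1)) x (EuclideanSpace.single i 1)

/-- Energy solution of `u_tt − t^{−2k}Δu + (μ/t)u_t = |u_t|^p` on `ℝ^N × [1,T)` with
data `u(·,1) = εf`, `u_t(·,1) = εg`. -/
structure IsEnergySolution (N : ℕ) (k μ p T ε : ℝ)
    (f g : EuclideanSpace ℝ (Fin N) → ℝ)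
    (u : EuclideanSpace ℝ (Fin N) → ℝ → ℝ) : Prop where
  cont_u : ContinuousOn (fun q : EuclideanSpace ℝ (Fin N) × ℝ => u q.1 q.2)
      (Set.univ ×ˢ Set.Ico 1 T)
  cont_ut : ContinuousOn (fun q : EuclideanSpace ℝ (Fin N) × ℝ => deriv (u q.1) q.2)
      (Set.univ ×ˢ Set.Ico 1 T)
  cont_grad : ContinuousOn
      (fun q : EuclideanSpace ℝ (Fin N) × ℝ => gradient (fun y => u y q.2) q.1)
      (Set.univ ×ˢ Set.Ico 1 T)
  init : ∀ x, u x 1 = ε * f x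
  weak : ∀ Φ : EuclideanSpace ℝ (Fin N) → ℝ → ℝ,
    ContDiff ℝ (⊤ : ℕ∞) (fun q : EuclideanSpace ℝ (Fin N) × ℝ => Φ q.1 q.2) →
    HasCompactSupport (fun q : EuclideanSpace ℝ (Fin N) × ℝ => Φ q.1 q.2) →
    ∀ t ∈ Set.Ico (1:ℝ) T,
      (∫ x, deriv (u x) t * Φ x t) - ε * (∫ x, g x * Φ x 1)
        - (∫ s in (1:ℝ)..t, ∫ x, deriv (u x) s * deriv (Φ x) s)
        + (∫ s in (1:ℝ)..t, s ^ (-(2*k)) *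
            ∫ x, (inner ℝ (gradient (fun y => u y s) x) (gradient (fun y => Φ y s) x) : ℝ))
        + (∫ s in (1:ℝ)..t, ∫ x, (μ / s) * deriv (u x) s * Φ x s)
      = ∫ s in (1:ℝ)..t, ∫ x, |deriv (u x) s| ^ p * Φ x s

/-- The support condition: `u(x,t) = 0` whenever `|x| > φ_k(t) + R`. -/
def SupportCondition (N : ℕ) (k R T : ℝ)
    (u : EuclideanSpace ℝ (Fin N) → ℝ → ℝ) : Prop :=
  ∀ x : EuclideanSpace ℝ (Fin N), ∀ t : ℝ, 1 ≤ t → t < T →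
    phik k t + R < ‖x‖ → u x t = 0

lemma my_sinh_le (y : ℝ) (hy : 0 ≤ y) : Real.sinh y ≤ y * Real.exp y := by
  have h := Real.add_one_le_exp (-(2*y))
  have hprod : Real.exp (-(2*y)) * Real.exp y = Real.exp (-y) := by
    rw [← Real.exp_add]; ring_nf
  have hpos : (0:ℝ) < Real.exp y := Real.exp_pos y
  rw [Real.sinh_eq]
  nlinarith [Real.exp_pos (-y)]

lemma my_cosh_sq_half (ζ : ℝ) : Real.cosh ζ = 1 + 2 * Real.sinh (ζ/2) ^ 2 := by
  have h : Real.cosh (2 * (ζ/2)) = Real.cosh (ζ/2) ^ 2 + Real.sinh (ζ/2) ^ 2 := Real.cosh_two_mul _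
  have h2 : Real.cosh (ζ/2) ^ 2 = Real.sinh (ζ/2) ^ 2 + 1 := Real.cosh_sq _
  have : (2 : ℝ) * (ζ/2) = ζ := by ring
  rw [this] at h
  linarith

lemma my_cosh_lower (ζ : ℝ) (hζ : 0 ≤ ζ) : 1 + ζ^2/2 ≤ Real.cosh ζ := by
  have hs : ζ/2 ≤ Real.sinh (ζ/2) := Real.self_le_sinh_iff.2 (by linarith)
  rw [my_cosh_sq_half]
  nlinarith

lemma my_cosh_upper (ζ : ℝ) (h0 : 0 ≤ ζ) (h1 : ζ ≤ 1) :
    Real.cosh ζ ≤ 1 + Real.exp 1 * ζ^2 := by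
  have hy : (0:ℝ) ≤ ζ/2 := by linarith
  have hs : Real.sinh (ζ/2) ≤ (ζ/2) * Real.exp (ζ/2) := my_sinh_le _ hy
  have hsn : 0 ≤ Real.sinh (ζ/2) := Real.sinh_nonneg_iff.2 hy
  have hesq : Real.exp (ζ/2) * Real.exp (ζ/2) = Real.exp ζ := by
    rw [← Real.exp_add]; ring_nf
  have he : Real.exp ζ ≤ Real.exp 1 := Real.exp_le_exp.2 h1
  have he1 : (1:ℝ) ≤ Real.exp 1 := by linarith [Real.add_one_le_exp (1:ℝ)]
  have hep : (0:ℝ) < Real.exp (ζ/2) := Real.exp_pos _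
  rw [my_cosh_sq_half]
  have h2 : Real.sinh (ζ/2)^2 ≤ (ζ/2 * Real.exp (ζ/2))^2 := by
    apply sq_le_sq' <;> nlinarith
  have h3 : (ζ/2 * Real.exp (ζ/2))^2 = ζ^2/4 * Real.exp ζ := by
    rw [mul_pow, sq (Real.exp (ζ/2)), hesq]; ring
  nlinarith [sq_nonneg ζ, Real.exp_pos (1:ℝ)]

lemma my_cosh_le_exp_abs (y : ℝ) : Real.cosh y ≤ Real.exp |y| := by
  rw [Real.cosh_eq]
  have h1 : Real.exp y ≤ Real.exp |y| := Real.exp_le_exp.2 (le_abs_self y)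
  have h2 : Real.exp (-y) ≤ Real.exp |y| := Real.exp_le_exp.2 (neg_le_abs y)
  linarith

lemma besselK_integrand_nonneg (ν x ζ : ℝ) :
    0 ≤ Real.exp (-x * Real.cosh ζ) * Real.cosh (ν * ζ) :=
  mul_nonneg (Real.exp_pos _).le (Real.cosh_pos _).le

lemma besselK_integrand_le (ν x : ℝ) (hx : 0 < x) (ζ : ℝ) (hζ : 0 ≤ ζ) :
    Real.exp (-x * Real.cosh ζ) * Real.cosh (ν * ζ)
      ≤ Real.exp (-x + ν^2/x) * Real.exp (-(x/4) * ζ^2) := by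
  have h1 : Real.cosh (ν * ζ) ≤ Real.exp (|ν| * ζ) := by
    have := my_cosh_le_exp_abs (ν * ζ)
    rwa [abs_mul, abs_of_nonneg hζ] at this
  have h2 : Real.exp (-x * Real.cosh ζ) * Real.cosh (ν * ζ)
      ≤ Real.exp (-x * Real.cosh ζ) * Real.exp (|ν| * ζ) :=
    mul_le_mul_of_nonneg_left h1 (Real.exp_pos _).le
  rw [← Real.exp_add] at h2
  rw [← Real.exp_add]
  refine h2.trans (Real.exp_le_exp.2 ?_)
  have h3 : 1 + ζ^2/2 ≤ Real.cosh ζ := my_cosh_lower ζ hζ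
  have h4 : |ν| * ζ ≤ ν^2/x + x/4 * ζ^2 := by
    have h5 := sq_nonneg (|ν| - x * ζ / 2)
    have h6 : |ν|^2 = ν^2 := sq_abs ν
    have h7 : |ν| * ζ - x/4 * ζ^2 ≤ ν^2 / x := by
      rw [le_div_iff₀ hx]; nlinarith
    linarith
  nlinarith [mul_le_mul_of_nonneg_left h3 hx.le]

lemma besselK_integrableOn (ν x : ℝ) (hx : 0 < x) :
    IntegrableOn (fun ζ => Real.exp (-x * Real.cosh ζ) * Real.cosh (ν * ζ)) (Set.Ioi 0) := by
  have hg : IntegrableOn (fun ζ : ℝ => Real.exp (-x + ν^2/x) * Real.exp (-(x/4) * ζ^2))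
      (Set.Ioi 0) := by
    refine (Integrable.const_mul ?_ _).integrableOn
    have := integrable_exp_neg_mul_sq (show (0:ℝ) < x/4 by linarith)
    simpa using this
  refine hg.mono' ?_ ?_
  · exact (Continuous.mul (by continuity) (by continuity)).aestronglyMeasurable
  · rw [ae_restrict_iff' measurableSet_Ioi]
    filter_upwards with ζ hζ
    rw [Real.norm_eq_abs, abs_of_nonneg (besselK_integrand_nonneg ν x ζ)]
    exact besselK_integrand_le ν x hx ζ (le_of_lt hζ)

lemma my_sqrt_four : Real.sqrt 4 = 2 := by
  rw [show (4:ℝ) = 2^2 by norm_num, Real.sqrt_sq (by norm_num : (0:ℝ) ≤ 2)]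

lemma besselK_upper (ν x : ℝ) (hx : 1 ≤ x) :
    besselK ν x ≤ Real.exp (ν^2) * Real.sqrt π * (Real.sqrt x)⁻¹ * Real.exp (-x) := by
  have hx0 : 0 < x := lt_of_lt_of_le one_pos hx
  have hg : IntegrableOn (fun ζ : ℝ => Real.exp (-x + ν^2/x) * Real.exp (-(x/4) * ζ^2))
      (Set.Ioi 0) := by
    refine (Integrable.const_mul ?_ _).integrableOn
    have := integrable_exp_neg_mul_sq (show (0:ℝ) < x/4 by linarith)
    simpa using this
  have step1 : besselK ν x ≤ ∫ ζ in Set.Ioi (0:ℝ),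
      Real.exp (-x + ν^2/x) * Real.exp (-(x/4) * ζ^2) := by
    refine setIntegral_mono_on (besselK_integrableOn ν x hx0) hg measurableSet_Ioi ?_
    exact fun ζ hζ => besselK_integrand_le ν x hx0 ζ (le_of_lt hζ)
  have step2 : (∫ ζ in Set.Ioi (0:ℝ), Real.exp (-x + ν^2/x) * Real.exp (-(x/4) * ζ^2))
      = Real.exp (-x + ν^2/x) * (Real.sqrt (π / (x/4)) / 2) := by
    rw [MeasureTheory.integral_const_mul, integral_gaussian_Ioi (x/4)]
  have hsq : Real.sqrt (π / (x/4)) / 2 = Real.sqrt π * (Real.sqrt x)⁻¹ := by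
    rw [show π / (x/4) = 4 * (π / x) by field_simp,
      Real.sqrt_mul (by norm_num : (0:ℝ) ≤ 4), my_sqrt_four,
      Real.sqrt_div Real.pi_pos.le]
    ring
  have hc : Real.exp (-x + ν^2/x) ≤ Real.exp (ν^2) * Real.exp (-x) := by
    rw [← Real.exp_add]
    refine Real.exp_le_exp.2 ?_
    have : ν^2/x ≤ ν^2 := by
      rw [div_le_iff₀ hx0]
      nlinarith [sq_nonneg ν]
    linarith
  calc besselK ν x ≤ Real.exp (-x + ν^2/x) * (Real.sqrt π * (Real.sqrt x)⁻¹) := by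
        rw [← hsq]; exact step1.trans_eq step2
    _ ≤ (Real.exp (ν^2) * Real.exp (-x)) * (Real.sqrt π * (Real.sqrt x)⁻¹) := by
        refine mul_le_mul_of_nonneg_right hc ?_
        positivity
    _ = Real.exp (ν^2) * Real.sqrt π * (Real.sqrt x)⁻¹ * Real.exp (-x) := by ring

lemma besselK_lower (ν x : ℝ) (hx : 1 ≤ x) :
    Real.exp (-(Real.exp 1)) * (Real.sqrt x)⁻¹ * Real.exp (-x) ≤ besselK ν x := by
  have hx0 : 0 < x := lt_of_lt_of_le one_pos hx
  set r : ℝ := (Real.sqrt x)⁻¹ with hr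
  have hsx : 1 ≤ Real.sqrt x := by
    rw [show (1:ℝ) = Real.sqrt 1 by simp]
    exact Real.sqrt_le_sqrt hx
  have hsx0 : 0 < Real.sqrt x := lt_of_lt_of_le one_pos hsx
  have hr0 : 0 < r := by positivity
  have hr1 : r ≤ 1 := by
    rw [hr]; exact inv_le_one_of_one_le₀ hsx
  have hr2 : r^2 * x = 1 := by
    rw [hr, ← Real.sq_sqrt hx0.le]
    field_simp
    rw [Real.sqrt_sq hsx0.le]
  have hbound : ∀ ζ ∈ Set.Ioc (0:ℝ) r, Real.exp (-(x + Real.exp 1))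
      ≤ Real.exp (-x * Real.cosh ζ) * Real.cosh (ν * ζ) := by
    intro ζ hζ
    have hζ0 : 0 ≤ ζ := hζ.1.le
    have hζr : ζ ≤ r := hζ.2
    have hζ1 : ζ ≤ 1 := hζr.trans hr1
    have hcu : Real.cosh ζ ≤ 1 + Real.exp 1 * ζ^2 := my_cosh_upper ζ hζ0 hζ1
    have hζ2 : ζ^2 ≤ r^2 := by nlinarith
    have hxc : x * Real.cosh ζ ≤ x + Real.exp 1 := by
      have h1 : x * Real.cosh ζ ≤ x * (1 + Real.exp 1 * ζ^2) :=
        mul_le_mul_of_nonneg_left hcu hx0.le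
      have h2 : x * (Real.exp 1 * ζ^2) ≤ Real.exp 1 := by
        have : x * ζ^2 ≤ 1 := by nlinarith
        nlinarith [Real.exp_pos (1:ℝ)]
      nlinarith
    have h1 : Real.exp (-(x + Real.exp 1)) ≤ Real.exp (-x * Real.cosh ζ) :=
      Real.exp_le_exp.2 (by nlinarith)
    have h2 : (1:ℝ) ≤ Real.cosh (ν * ζ) := Real.one_le_cosh _
    nlinarith [Real.exp_pos (-x * Real.cosh ζ)]
  have hfint : IntegrableOn (fun ζ => Real.exp (-x * Real.cosh ζ) * Real.cosh (ν * ζ))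
      (Set.Ioi 0) := besselK_integrableOn ν x hx0
  have step1 : (∫ _ζ in Set.Ioc (0:ℝ) r, Real.exp (-(x + Real.exp 1)))
      ≤ ∫ ζ in Set.Ioc (0:ℝ) r, Real.exp (-x * Real.cosh ζ) * Real.cosh (ν * ζ) := by
    refine setIntegral_mono_on ?_ (hfint.mono_set Set.Ioc_subset_Ioi_self)
      measurableSet_Ioc hbound
    exact integrableOn_const measure_Ioc_lt_top.ne
  have step2 : (∫ _ζ in Set.Ioc (0:ℝ) r, Real.exp (-(x + Real.exp 1)))
      = r * Real.exp (-(x + Real.exp 1)) := by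
    rw [setIntegral_const, measureReal_def, Real.volume_Ioc, smul_eq_mul]
    rw [ENNReal.toReal_ofReal (by linarith : (0:ℝ) ≤ r - 0)]
    ring
  have step3 : (∫ ζ in Set.Ioc (0:ℝ) r, Real.exp (-x * Real.cosh ζ) * Real.cosh (ν * ζ))
      ≤ besselK ν x := by
    refine setIntegral_mono_set hfint ?_ Set.Ioc_subset_Ioi_self.eventuallyLE
    filter_upwards with ζ
    exact besselK_integrand_nonneg ν x ζ
  have hkey : Real.exp (-(Real.exp 1)) * r * Real.exp (-x)
      = r * Real.exp (-(x + Real.exp 1)) := by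
    rw [show -(x + Real.exp 1) = -Real.exp 1 + -x by ring, Real.exp_add]; ring
  rw [hkey]
  exact step2.symm.trans_le (step1.trans step3)

/-- `ρ` is positive on `[1,∞)` and comparable to `t^{(k+μ)/2} e^{−φ_k(t)}`. -/
theorem rho_positive_and_bounds (μ k : ℝ) (hμ : 0 ≤ μ) (hk0 : 0 ≤ k) (hk1 : k < 1) :
    (∀ t : ℝ, 1 ≤ t → 0 < rho μ k t) ∧
    ∃ C₁ > (0:ℝ), ∀ t : ℝ, 1 ≤ t →
      C₁⁻¹ * t ^ ((k + μ) / 2) * Real.exp (-(phik k t)) ≤ rho μ k t ∧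
      rho μ k t ≤ C₁ * t ^ ((k + μ) / 2) * Real.exp (-(phik k t)) := by
  have hk : 0 < 1 - k := by linarith
  set ν : ℝ := (μ - 1) / (2 * (1 - k)) with hνd
  set cu : ℝ := Real.exp (ν^2) * Real.sqrt π * Real.sqrt (1 - k) with hcud
  set cl : ℝ := Real.exp (-(Real.exp 1)) * Real.sqrt (1 - k) with hcld
  have hcl : 0 < cl := by rw [hcld]; positivity
  have hcu : 0 < cu := by rw [hcud]; positivity
  set C₁ : ℝ := cu + cl⁻¹ + 1 with hC₁d
  have hC : 0 < C₁ := by rw [hC₁d]; positivity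
  have hbd : ∀ t : ℝ, 1 ≤ t →
      cl * (t ^ ((k+μ)/2) * Real.exp (-(phik k t))) ≤ rho μ k t ∧
      rho μ k t ≤ cu * (t ^ ((k+μ)/2) * Real.exp (-(phik k t))) := by
    intro t ht
    have ht0 : 0 < t := lt_of_lt_of_le one_pos ht
    set x := phik k t with hxdef
    have hx1 : 1 ≤ x := by
      rw [hxdef, phik, le_div_iff₀ hk]
      have h1 : (1:ℝ) ≤ t ^ (1-k) := Real.one_le_rpow ht (by linarith)
      linarith
    have hsx : Real.sqrt x = t ^ ((1-k)/2) / Real.sqrt (1-k) := by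
      rw [hxdef, phik, Real.sqrt_div (Real.rpow_nonneg ht0.le _),
        Real.sqrt_eq_rpow, ← Real.rpow_mul ht0.le,
        show (1-k)*(1/2 : ℝ) = (1-k)/2 by ring]
    have key : t ^ ((1+μ)/2) * (Real.sqrt x)⁻¹ = Real.sqrt (1-k) * t ^ ((k+μ)/2) := by
      rw [hsx]
      have hden : (0:ℝ) < t ^ ((1-k)/2) := Real.rpow_pos_of_pos ht0 _
      have hsk : (0:ℝ) < Real.sqrt (1-k) := Real.sqrt_pos.2 hk
      rw [show ((k+μ)/2 : ℝ) = (1+μ)/2 - (1-k)/2 by ring, Real.rpow_sub ht0]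
      field_simp
    have htp : 0 < t ^ ((1+μ)/2) := Real.rpow_pos_of_pos ht0 _
    constructor
    · have hKl := besselK_lower ν x hx1
      calc cl * (t ^ ((k+μ)/2) * Real.exp (-x))
          = t ^ ((1+μ)/2) * (Real.exp (-(Real.exp 1)) * (Real.sqrt x)⁻¹ * Real.exp (-x)) := by
            rw [hcld, show Real.exp (-(Real.exp 1)) * Real.sqrt (1-k) *
              (t ^ ((k+μ)/2) * Real.exp (-x)) = Real.exp (-(Real.exp 1)) *
              (Real.sqrt (1-k) * t ^ ((k+μ)/2)) * Real.exp (-x) by ring, ← key]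
            ring
        _ ≤ t ^ ((1+μ)/2) * besselK ν x := mul_le_mul_of_nonneg_left hKl htp.le
        _ = rho μ k t := rfl
    · have hKu := besselK_upper ν x hx1
      calc rho μ k t = t ^ ((1+μ)/2) * besselK ν x := rfl
        _ ≤ t ^ ((1+μ)/2) * (Real.exp (ν^2) * Real.sqrt π * (Real.sqrt x)⁻¹ * Real.exp (-x)) :=
            mul_le_mul_of_nonneg_left hKu htp.le
        _ = Real.exp (ν^2) * Real.sqrt π * (t ^ ((1+μ)/2) * (Real.sqrt x)⁻¹) * Real.exp (-x) := by
            ring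
        _ = cu * (t ^ ((k+μ)/2) * Real.exp (-x)) := by
            rw [key, hcud]; ring
  constructor
  · intro t ht
    have ht0 : 0 < t := lt_of_lt_of_le one_pos ht
    have htp2 : 0 < t ^ ((k+μ)/2) := Real.rpow_pos_of_pos ht0 _
    have h := (hbd t ht).1
    have : 0 < cl * (t ^ ((k+μ)/2) * Real.exp (-(phik k t))) := by
      exact mul_pos hcl (mul_pos htp2 (Real.exp_pos _))
    linarith
  · refine ⟨C₁, hC, fun t ht => ?_⟩
    have ht0 : 0 < t := lt_of_lt_of_le one_pos ht
    have htp2 : 0 < t ^ ((k+μ)/2) := Real.rpow_pos_of_pos ht0 _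
    have hep : 0 < Real.exp (-(phik k t)) := Real.exp_pos _
    have h1 : cl⁻¹ ≤ C₁ := by rw [hC₁d]; linarith
    have h2 : C₁⁻¹ ≤ cl := by
      have h3 := inv_anti₀ (by positivity : (0:ℝ) < cl⁻¹) h1
      rwa [inv_inv] at h3
    have h4 : cu ≤ C₁ := by
      rw [hC₁d]
      have : 0 < cl⁻¹ := by positivity
      linarith
    constructor
    · calc C₁⁻¹ * t ^ ((k+μ)/2) * Real.exp (-(phik k t))
          = C₁⁻¹ * (t ^ ((k+μ)/2) * Real.exp (-(phik k t))) := by ring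
        _ ≤ cl * (t ^ ((k+μ)/2) * Real.exp (-(phik k t))) :=
            mul_le_mul_of_nonneg_right h2 (by positivity)
        _ ≤ rho μ k t := (hbd t ht).1
    · calc rho μ k t ≤ cu * (t ^ ((k+μ)/2) * Real.exp (-(phik k t))) := (hbd t ht).2
        _ ≤ C₁ * (t ^ ((k+μ)/2) * Real.exp (-(phik k t))) :=
            mul_le_mul_of_nonneg_right h4 (by positivity)
        _ = C₁ * t ^ ((k+μ)/2) * Real.exp (-(phik k t)) := by ring
end

section
/- Let μ ≥ 0 and k ∈ [0,1). The function ρ is differentiable on [1,∞) and lim_{t → +∞} t^k ρ'(t)/ρ(t) = −1. -/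
open MeasureTheory Real Set Filter

lemma my_cosh_le_exp {x : ℝ} (hx : 0 ≤ x) : Real.cosh x ≤ Real.exp x := by
  rw [Real.cosh_eq]
  have h := Real.exp_le_exp.2 (neg_le_self hx)
  linarith

lemma my_exp_le_two_cosh (x : ℝ) : Real.exp x ≤ 2 * Real.cosh x := by
  rw [Real.cosh_eq]; have := (Real.exp_pos (-x)).le; linarith

lemma my_cosh_mul_le {ν x : ℝ} (hx : 0 ≤ x) : Real.cosh (ν * x) ≤ Real.exp (|ν| * x) := by
  rw [← Real.cosh_abs]
  calc Real.cosh |ν * x| ≤ Real.exp |ν * x| := my_cosh_le_exp (abs_nonneg _)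
  _ = Real.exp (|ν| * x) := by rw [abs_mul, abs_of_nonneg hx]

lemma my_integrableOn_exp_lin_sub_exp (a : ℝ) {b : ℝ} (hb : 0 < b) :
    IntegrableOn (fun ζ : ℝ => Real.exp (a * ζ - b * Real.exp ζ)) (Ioi 0) := by
  have hmajint : IntegrableOn (fun ζ : ℝ => Real.exp ((a+1)^2 / b) * Real.exp (-ζ)) (Ioi 0) := by
    simpa [IntegrableOn] using (exp_neg_integrableOn_Ioi 0 one_pos).const_mul (Real.exp ((a+1)^2/b))
  have hmaj : ∀ ζ ∈ Ioi (0:ℝ),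
      ‖Real.exp (a * ζ - b * Real.exp ζ)‖ ≤ Real.exp ((a+1)^2 / b) * Real.exp (-ζ) := by
    intro ζ hζ
    have hζ0 : (0:ℝ) ≤ ζ := le_of_lt hζ
    rw [Real.norm_eq_abs, Real.abs_exp, ← Real.exp_add]
    apply Real.exp_le_exp.2
    have h2 : 1 + ζ/2 ≤ Real.exp (ζ/2) := by nlinarith [Real.add_one_le_exp (ζ/2)]
    have h1 : (1 + ζ/2)^2 ≤ Real.exp ζ := by
      have he : Real.exp ζ = Real.exp (ζ/2) * Real.exp (ζ/2) := by
        rw [← Real.exp_add]; ring_nf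
      nlinarith [Real.exp_pos (ζ/2)]
    have h3 : b * (1 + ζ/2)^2 ≤ b * Real.exp ζ := by nlinarith
    have key : a * ζ + ζ ≤ (a+1)^2 / b + b * (ζ^2/4) := by
      rw [div_add' _ _ _ hb.ne', le_div_iff₀ hb]
      nlinarith [sq_nonneg (b * ζ - 2*(a+1))]
    nlinarith
  exact Integrable.mono' hmajint
    ((Real.continuous_exp.comp (by continuity)).aestronglyMeasurable)
    ((ae_restrict_iff' measurableSet_Ioi).2 (ae_of_all _ hmaj))

lemma my_intK_pow (ν s : ℝ) (hs : 0 < s) (n : ℕ) :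
    IntegrableOn (fun ζ => Real.exp (-s * Real.cosh ζ) * (Real.cosh ζ)^n * Real.cosh (ν * ζ))
      (Ioi 0) := by
  apply Integrable.mono' (my_integrableOn_exp_lin_sub_exp ((n:ℝ) + |ν|) (half_pos hs))
  · exact (by continuity : Continuous fun ζ => Real.exp (-s * Real.cosh ζ) * (Real.cosh ζ)^n * Real.cosh (ν * ζ)).aestronglyMeasurable
  · refine (ae_restrict_iff' measurableSet_Ioi).2 (ae_of_all _ fun ζ hζ => ?_)
    have hζ0 : (0:ℝ) ≤ ζ := le_of_lt hζ
    have hc1 : (1:ℝ) ≤ Real.cosh ζ := Real.one_le_cosh ζ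
    have hcν : (0:ℝ) < Real.cosh (ν * ζ) := Real.cosh_pos _
    rw [Real.norm_eq_abs, abs_of_nonneg (by positivity)]
    have e1 : Real.exp (-s * Real.cosh ζ) ≤ Real.exp (-(s/2) * Real.exp ζ) := by
      apply Real.exp_le_exp.2
      have := my_exp_le_two_cosh ζ
      nlinarith
    have e2 : (Real.cosh ζ)^n ≤ Real.exp ((n:ℝ) * ζ) := by
      have : Real.exp ((n:ℝ) * ζ) = (Real.exp ζ)^n := by
        rw [Real.exp_nat_mul]
      rw [this]
      exact pow_le_pow_left₀ (by positivity) (my_cosh_le_exp hζ0) n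
    have e3 : Real.cosh (ν * ζ) ≤ Real.exp (|ν| * ζ) := my_cosh_mul_le hζ0
    calc Real.exp (-s * Real.cosh ζ) * (Real.cosh ζ)^n * Real.cosh (ν * ζ)
        ≤ Real.exp (-(s/2) * Real.exp ζ) * Real.exp ((n:ℝ)*ζ) * Real.exp (|ν| * ζ) := by
          apply mul_le_mul (mul_le_mul e1 e2 (by positivity) (by positivity)) e3
            (by positivity) (by positivity)
      _ = Real.exp (((n:ℝ) + |ν|) * ζ - s/2 * Real.exp ζ) := by
          rw [← Real.exp_add, ← Real.exp_add]; ring_nf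

noncomputable def besselKD (ν s : ℝ) : ℝ :=
  ∫ ζ in Ioi (0:ℝ), Real.exp (-s * Real.cosh ζ) * Real.cosh ζ * Real.cosh (ν * ζ)

lemma my_intK (ν : ℝ) {s : ℝ} (hs : 0 < s) :
    IntegrableOn (fun ζ => Real.exp (-s * Real.cosh ζ) * Real.cosh (ν * ζ)) (Ioi 0) := by
  have := my_intK_pow ν s hs 0
  simpa using this

lemma my_intK1 (ν : ℝ) {s : ℝ} (hs : 0 < s) :
    IntegrableOn (fun ζ => Real.exp (-s * Real.cosh ζ) * Real.cosh ζ * Real.cosh (ν * ζ)) (Ioi 0) := by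
  have := my_intK_pow ν s hs 1
  simpa using this

lemma my_hasDerivAt_besselK (ν : ℝ) {s : ℝ} (hs : 0 < s) :
    HasDerivAt (besselK ν) (-(besselKD ν s)) s := by
  have key := hasDerivAt_integral_of_dominated_loc_of_deriv_le
    (μ := volume.restrict (Ioi (0:ℝ)))
    (F := fun (σ : ℝ) (ζ : ℝ) => Real.exp (-σ * Real.cosh ζ) * Real.cosh (ν * ζ))
    (F' := fun (σ : ℝ) (ζ : ℝ) => -(Real.exp (-σ * Real.cosh ζ) * Real.cosh ζ * Real.cosh (ν * ζ)))
    (x₀ := s)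
    (bound := fun ζ => Real.exp (-(s/2) * Real.cosh ζ) * Real.cosh ζ * Real.cosh (ν * ζ))
    (Metric.ball_mem_nhds s (half_pos hs))
    (Filter.Eventually.of_forall fun σ =>
      (by continuity : Continuous fun ζ => Real.exp (-σ * Real.cosh ζ) * Real.cosh (ν * ζ)).aestronglyMeasurable)
    (my_intK ν hs)
    ((by continuity : Continuous fun ζ => -(Real.exp (-s * Real.cosh ζ) * Real.cosh ζ * Real.cosh (ν * ζ))).aestronglyMeasurable)
    (ae_of_all _ fun ζ => fun σ hσ => by
      have hσ2 : s/2 ≤ σ := by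
        have := abs_lt.1 (by simpa [Real.dist_eq] using hσ)
        linarith [this.1]
      have hc1 : (1:ℝ) ≤ Real.cosh ζ := Real.one_le_cosh ζ
      have hcν : (0:ℝ) < Real.cosh (ν * ζ) := Real.cosh_pos _
      rw [norm_neg, Real.norm_eq_abs, abs_of_nonneg (by positivity)]
      have h : Real.exp (-σ * Real.cosh ζ) ≤ Real.exp (-(s/2) * Real.cosh ζ) := by
        apply Real.exp_le_exp.2; nlinarith
      show Real.exp (-σ * Real.cosh ζ) * Real.cosh ζ * Real.cosh (ν * ζ)
        ≤ Real.exp (-(s/2) * Real.cosh ζ) * Real.cosh ζ * Real.cosh (ν * ζ)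
      exact mul_le_mul_of_nonneg_right
        (mul_le_mul_of_nonneg_right h (by positivity)) (by positivity))
    (my_intK1 ν (half_pos hs))
    (ae_of_all _ fun ζ => fun σ hσ => by
      have h1 : HasDerivAt (fun σ : ℝ => -σ * Real.cosh ζ) (-Real.cosh ζ) σ := by
        simpa [neg_mul] using (hasDerivAt_id σ).neg.mul_const (Real.cosh ζ)
      have h2 := (h1.exp.mul_const (Real.cosh (ν * ζ)))
      exact h2.congr_deriv (by ring))
  have h2 := key.2
  have : besselK ν = fun σ => ∫ ζ in Ioi (0:ℝ), Real.exp (-σ * Real.cosh ζ) * Real.cosh (ν * ζ) := rfl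
  rw [this]
  exact h2.congr_deriv (by rw [besselKD, ← integral_neg])

lemma my_besselK_pos (ν : ℝ) {s : ℝ} (hs : 0 < s) : 0 < besselK ν s := by
  have h0 : 0 ≤ᶠ[ae (volume.restrict (Ioi (0:ℝ)))]
      fun ζ => Real.exp (-s * Real.cosh ζ) * Real.cosh (ν * ζ) :=
    ae_of_all _ fun ζ => by positivity
  rw [besselK, setIntegral_pos_iff_support_of_nonneg_ae h0 (my_intK ν hs)]
  have hsub : Ioi (0:ℝ) ⊆ Function.support fun ζ => Real.exp (-s * Real.cosh ζ) * Real.cosh (ν * ζ) := by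
    intro ζ _
    simp only [Function.mem_support]
    positivity
  refine lt_of_lt_of_le ?_ (measure_mono (subset_inter hsub Subset.rfl))
  simp [Real.volume_Ioi]

lemma my_besselKD_nonneg (ν : ℝ) {s : ℝ} (hs : 0 < s) : 0 ≤ besselKD ν s := by
  apply setIntegral_nonneg measurableSet_Ioi
  intro ζ _
  have := Real.one_le_cosh ζ
  have := (Real.cosh_pos (ν*ζ))
  positivity

lemma my_besselK_lower (ν : ℝ) {s δ : ℝ} (hs : 0 < s) (hδ : 0 < δ) :
    δ * Real.exp (-s * Real.cosh δ) ≤ besselK ν s := by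
  have hint := my_intK ν hs
  have hIoc : IntegrableOn (fun ζ => Real.exp (-s * Real.cosh ζ) * Real.cosh (ν * ζ)) (Ioc 0 δ) :=
    hint.mono_set Ioc_subset_Ioi_self
  have step0 : ∫ _ζ in Ioc (0:ℝ) δ, Real.exp (-s * Real.cosh δ) = δ * Real.exp (-s * Real.cosh δ) := by
    rw [setIntegral_const]
    simp [Real.volume_Ioc, hδ.le]
  have step1 : ∫ _ζ in Ioc (0:ℝ) δ, Real.exp (-s * Real.cosh δ)
      ≤ ∫ ζ in Ioc (0:ℝ) δ, Real.exp (-s * Real.cosh ζ) * Real.cosh (ν * ζ) := by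
    apply setIntegral_mono_on
    · exact integrableOn_const (by simp [Real.volume_Ioc])
    · exact hIoc
    · exact measurableSet_Ioc
    · intro ζ hζ
      have hcc : Real.cosh ζ ≤ Real.cosh δ := by
        rw [Real.cosh_le_cosh, abs_of_pos hζ.1, abs_of_pos hδ]
        exact hζ.2
      have h1 : Real.exp (-s * Real.cosh δ) ≤ Real.exp (-s * Real.cosh ζ) := by
        apply Real.exp_le_exp.2; nlinarith
      have h2 : (1:ℝ) ≤ Real.cosh (ν * ζ) := Real.one_le_cosh _
      calc Real.exp (-s * Real.cosh δ) ≤ Real.exp (-s * Real.cosh ζ) := h1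
        _ ≤ Real.exp (-s * Real.cosh ζ) * Real.cosh (ν * ζ) :=
          le_mul_of_one_le_right (Real.exp_pos _).le h2
  have step2 : ∫ ζ in Ioc (0:ℝ) δ, Real.exp (-s * Real.cosh ζ) * Real.cosh (ν * ζ)
      ≤ besselK ν s := by
    rw [besselK]
    apply setIntegral_mono_set hint
    · exact ae_of_all _ fun ζ => by positivity
    · exact HasSubset.Subset.eventuallyLE Ioc_subset_Ioi_self
  linarith [step0 ▸ step1]

set_option maxHeartbeats 2000000 in
lemma my_ratio (ν : ℝ) :
    Filter.Tendsto (fun s => besselKD ν s / besselK ν s) atTop (nhds 1) := by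
  have hdiff : Filter.Tendsto (fun s => (besselKD ν s - besselK ν s) / besselK ν s)
      atTop (nhds 0) := by
    rw [NormedAddCommGroup.tendsto_nhds_zero]
    intro ε hε
    set ε1 : ℝ := ε/2 with hε1def
    have hε1 : 0 < ε1 := by positivity
    set δ : ℝ := Real.log (1 + ε1) with hδdef
    have hδ : 0 < δ := Real.log_pos (by linarith)
    have hexpδ : Real.exp δ = 1 + ε1 := Real.exp_log (by linarith)
    set c : ℝ := Real.cosh δ - 1 with hcdef
    have hc : 0 < c := by
      have := Real.one_lt_cosh.2 hδ.ne'
      simp only [hcdef]; linarith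
    set δ2 : ℝ := Real.log (1 + c/2) with hδ2def
    have hδ2 : 0 < δ2 := Real.log_pos (by linarith)
    have hexpδ2 : Real.exp δ2 = 1 + c/2 := Real.exp_log (by linarith)
    have hcoshδ2 : Real.cosh δ2 ≤ 1 + c/2 := (my_cosh_le_exp hδ2.le).trans hexpδ2.le
    set C : ℝ := besselKD ν 1 with hCdef
    have hC : 0 ≤ C := my_besselKD_nonneg ν one_pos
    set g : ℝ → ℝ := fun s => C * Real.exp (1 + c) / δ2 * Real.exp (-(c/2) * s) with hgdef
    have htail : Filter.Tendsto g atTop (nhds 0) := by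
      have h1 : Filter.Tendsto (fun s : ℝ => -(c/2) * s) atTop atBot := by
        apply Filter.Tendsto.const_mul_atTop_of_neg (by linarith : -(c/2) < 0) Filter.tendsto_id
      have h2 := Real.tendsto_exp_atBot.comp h1
      simpa [hgdef, neg_mul, Function.comp] using h2.const_mul (C * Real.exp (1 + c) / δ2)
    have hgs : ∀ᶠ s in atTop, g s < ε/2 := htail.eventually_lt_const (by linarith)
    filter_upwards [eventually_ge_atTop (1:ℝ), hgs] with s hs1 hgslt
    have hs0 : (0:ℝ) < s := lt_of_lt_of_le one_pos hs1
    have hK : 0 < besselK ν s := my_besselK_pos ν hs0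
    set h : ℝ → ℝ := fun ζ => Real.exp (-s * Real.cosh ζ) * (Real.cosh ζ - 1) * Real.cosh (ν * ζ)
      with hhdef
    have hInt : IntegrableOn h (Ioi 0) := by
      apply Integrable.congr ((my_intK1 ν hs0).sub (my_intK ν hs0))
      exact ae_of_all _ fun ζ => by simp only [hhdef, Pi.sub_apply]; ring
    have hD : besselKD ν s - besselK ν s = ∫ ζ in Ioi (0:ℝ), h ζ := by
      rw [besselKD, besselK, ← integral_sub (my_intK1 ν hs0) (my_intK ν hs0)]
      exact integral_congr_ae (ae_of_all _ fun ζ => by simp only [hhdef]; ring)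
    have hhnn : ∀ ζ : ℝ, 0 ≤ h ζ := by
      intro ζ
      have h1 := Real.one_le_cosh ζ
      have h2 := (Real.cosh_pos (ν*ζ)).le
      have h3 := (Real.exp_pos (-s * Real.cosh ζ)).le
      simp only [hhdef]
      have : (0:ℝ) ≤ Real.cosh ζ - 1 := by linarith
      positivity
    have hDnn : 0 ≤ besselKD ν s - besselK ν s := by
      rw [hD]; exact setIntegral_nonneg measurableSet_Ioi fun ζ _ => hhnn ζ
    have hsplit : ∫ ζ in Ioi (0:ℝ), h ζ = (∫ ζ in Ioc (0:ℝ) δ, h ζ) + ∫ ζ in Ioi δ, h ζ := by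
      rw [← setIntegral_union Ioc_disjoint_Ioi_same measurableSet_Ioi
        (hInt.mono_set Ioc_subset_Ioi_self) (hInt.mono_set (Ioi_subset_Ioi hδ.le)),
        Ioc_union_Ioi_eq_Ioi hδ.le]
    -- bound A
    have boundA : ∫ ζ in Ioc (0:ℝ) δ, h ζ ≤ ε1 * besselK ν s := by
      have stepa : ∫ ζ in Ioc (0:ℝ) δ, h ζ
          ≤ ∫ ζ in Ioc (0:ℝ) δ, ε1 * (Real.exp (-s * Real.cosh ζ) * Real.cosh (ν * ζ)) := by
        apply setIntegral_mono_on (hInt.mono_set Ioc_subset_Ioi_self)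
          (((my_intK ν hs0).mono_set Ioc_subset_Ioi_self).const_mul ε1) measurableSet_Ioc
        intro ζ hζ
        have hcosh : Real.cosh ζ - 1 ≤ ε1 := by
          have := (my_cosh_le_exp (le_of_lt hζ.1)).trans
            ((Real.exp_le_exp.2 hζ.2).trans_eq hexpδ)
          linarith
        have he := (Real.exp_pos (-s * Real.cosh ζ)).le
        have hcν := (Real.cosh_pos (ν * ζ)).le
        simp only [hhdef]
        nlinarith [mul_nonneg (mul_nonneg (sub_nonneg.2 hcosh) he) hcν]
      have stepb : ∫ ζ in Ioc (0:ℝ) δ, ε1 * (Real.exp (-s * Real.cosh ζ) * Real.cosh (ν * ζ))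
          ≤ ε1 * besselK ν s := by
        rw [integral_const_mul]
        apply mul_le_mul_of_nonneg_left _ hε1.le
        rw [besselK]
        apply setIntegral_mono_set (my_intK ν hs0) (ae_of_all _ fun ζ => by positivity)
          (HasSubset.Subset.eventuallyLE Ioc_subset_Ioi_self)
      linarith
    -- bound B
    have boundB : ∫ ζ in Ioi δ, h ζ ≤ Real.exp (-(s-1)*(1+c)) * C := by
      have stepa : ∫ ζ in Ioi δ, h ζ
          ≤ ∫ ζ in Ioi δ, Real.exp (-(s-1)*(1+c)) *
              (Real.exp (-1 * Real.cosh ζ) * Real.cosh ζ * Real.cosh (ν * ζ)) := by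
        apply setIntegral_mono_on (hInt.mono_set (Ioi_subset_Ioi hδ.le))
          (((my_intK1 ν one_pos).mono_set (Ioi_subset_Ioi hδ.le)).const_mul _) measurableSet_Ioi
        intro ζ hζ
        have hζδ : δ < ζ := hζ
        have hcosh : 1 + c ≤ Real.cosh ζ := by
          have : Real.cosh δ ≤ Real.cosh ζ := by
            rw [Real.cosh_le_cosh, abs_of_pos hδ, abs_of_pos (hδ.trans hζδ)]
            exact hζδ.le
          simp only [hcdef] at this ⊢; linarith
        have hesplit : Real.exp (-s * Real.cosh ζ)
            = Real.exp (-(s-1) * Real.cosh ζ) * Real.exp (-1 * Real.cosh ζ) := by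
          rw [← Real.exp_add]; congr 1; ring
        have he1 : Real.exp (-(s-1) * Real.cosh ζ) ≤ Real.exp (-(s-1)*(1+c)) := by
          apply Real.exp_le_exp.2
          nlinarith
        have hc1 := Real.one_le_cosh ζ
        have hcν := (Real.cosh_pos (ν * ζ)).le
        have he2 := (Real.exp_pos (-1 * Real.cosh ζ)).le
        simp only [hhdef]
        calc Real.exp (-s * Real.cosh ζ) * (Real.cosh ζ - 1) * Real.cosh (ν * ζ)
            = Real.exp (-(s-1) * Real.cosh ζ) *
              (Real.exp (-1 * Real.cosh ζ) * (Real.cosh ζ - 1) * Real.cosh (ν * ζ)) := by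
              rw [hesplit]; ring
          _ ≤ Real.exp (-(s-1)*(1+c)) *
              (Real.exp (-1 * Real.cosh ζ) * Real.cosh ζ * Real.cosh (ν * ζ)) := by
              apply mul_le_mul he1 _ _ (Real.exp_pos _).le
              · apply mul_le_mul_of_nonneg_right _ hcν
                apply mul_le_mul_of_nonneg_left (by linarith) he2
              · exact mul_nonneg (mul_nonneg he2 (by linarith)) hcν
      have stepb : ∫ ζ in Ioi δ, Real.exp (-(s-1)*(1+c)) *
            (Real.exp (-1 * Real.cosh ζ) * Real.cosh ζ * Real.cosh (ν * ζ))
          ≤ Real.exp (-(s-1)*(1+c)) * C := by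
        rw [integral_const_mul]
        apply mul_le_mul_of_nonneg_left _ (Real.exp_pos _).le
        simp only [hCdef, besselKD]
        apply setIntegral_mono_set (my_intK1 ν one_pos)
          (ae_of_all _ fun ζ => by
            have := Real.one_le_cosh ζ
            have := Real.cosh_pos (ν*ζ)
            positivity)
          (HasSubset.Subset.eventuallyLE (Ioi_subset_Ioi hδ.le))
      linarith
    -- lower bound for K
    have lower : δ2 * Real.exp (-s * (1 + c/2)) ≤ besselK ν s := by
      have h1 := my_besselK_lower ν hs0 hδ2
      have h2 : Real.exp (-s * (1 + c/2)) ≤ Real.exp (-s * Real.cosh δ2) := by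
        apply Real.exp_le_exp.2; nlinarith
      nlinarith
    -- key equality for tail
    have hgeq : g s * (δ2 * Real.exp (-s * (1 + c/2))) = Real.exp (-(s-1)*(1+c)) * C := by
      have e : Real.exp (1+c) * (Real.exp (-(c/2) * s) * Real.exp (-s*(1+c/2)))
          = Real.exp (-(s-1)*(1+c)) := by
        rw [← Real.exp_add, ← Real.exp_add]; congr 1; ring
      simp only [hgdef]
      calc (C * Real.exp (1+c) / δ2 * Real.exp (-(c/2)*s)) * (δ2 * Real.exp (-s*(1+c/2)))
          = C * (Real.exp (1+c) * (Real.exp (-(c/2)*s) * Real.exp (-s*(1+c/2)))) * (δ2 / δ2) := by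
            ring
        _ = Real.exp (-(s-1)*(1+c)) * C := by rw [e, div_self hδ2.ne']; ring
    have hBK : Real.exp (-(s-1)*(1+c)) * C ≤ g s * besselK ν s := by
      rw [← hgeq]
      apply mul_le_mul_of_nonneg_left lower
      exact mul_nonneg (div_nonneg (mul_nonneg hC (Real.exp_pos _).le) hδ2.le) (Real.exp_pos _).le
    -- conclude
    rw [Real.norm_eq_abs, abs_of_nonneg (div_nonneg hDnn hK.le), div_lt_iff₀ hK]
    have : besselKD ν s - besselK ν s ≤ ε1 * besselK ν s + g s * besselK ν s := by
      rw [hD, hsplit]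
      have := boundB.trans hBK
      linarith
    have hfinal : (ε1 + g s) * besselK ν s < ε * besselK ν s := by
      apply mul_lt_mul_of_pos_right _ hK
      simp only [hε1def]; linarith
    have hexpand : (ε1 + g s) * besselK ν s = ε1 * besselK ν s + g s * besselK ν s := by ring
    linarith
  have h1 : Filter.Tendsto (fun s => 1 + (besselKD ν s - besselK ν s) / besselK ν s)
      atTop (nhds (1 + 0)) := tendsto_const_nhds.add hdiff
  rw [add_zero] at h1
  apply h1.congr'
  filter_upwards [eventually_gt_atTop (0:ℝ)] with s hs
  have hK := (my_besselK_pos ν hs).ne'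
  field_simp
  ring

/-- `ρ` is differentiable on `[1,∞)` and `t^k ρ'(t)/ρ(t) → −1` as `t → ∞`. -/
theorem rho_log_deriv_limit (μ k : ℝ) (hμ : 0 ≤ μ) (hk0 : 0 ≤ k) (hk1 : k < 1) :
    (∀ t : ℝ, 1 ≤ t → DifferentiableAt ℝ (rho μ k) t) ∧
    Filter.Tendsto (fun t : ℝ => t ^ k * deriv (rho μ k) t / rho μ k t)
      Filter.atTop (nhds (-1)) := by
  have h1k : (0:ℝ) < 1 - k := by linarith
  set ν : ℝ := (μ - 1) / (2 * (1 - k)) with hνdef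
  set a : ℝ := (1 + μ) / 2 with hadef
  have hφ : ∀ t : ℝ, 0 < t → HasDerivAt (phik k) (t ^ (-k)) t := by
    intro t ht
    have h := (Real.hasDerivAt_rpow_const (x := t) (p := 1-k) (Or.inl ht.ne')).div_const (1-k)
    have he : (1 - k) * t ^ (1 - k - 1) / (1 - k) = t ^ (-k) := by
      rw [mul_div_cancel_left₀ _ h1k.ne']
      congr 1; ring
    rw [he] at h
    exact h
  have hφpos : ∀ t : ℝ, 1 ≤ t → 0 < phik k t := by
    intro t ht
    exact div_pos (Real.rpow_pos_of_pos (by linarith) _) h1k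
  have hrho : ∀ t : ℝ, 1 ≤ t → HasDerivAt (rho μ k)
      (a * t ^ (a - 1) * besselK ν (phik k t)
        - t ^ a * besselKD ν (phik k t) * t ^ (-k)) t := by
    intro t ht
    have ht0 : (0:ℝ) < t := lt_of_lt_of_le one_pos ht
    have h1 : HasDerivAt (fun t : ℝ => t ^ a) (a * t ^ (a-1)) t :=
      Real.hasDerivAt_rpow_const (Or.inl ht0.ne')
    have h2 : HasDerivAt (fun t => besselK ν (phik k t))
        (-(besselKD ν (phik k t)) * t ^ (-k)) t :=
      (my_hasDerivAt_besselK ν (hφpos t ht)).comp t (hφ t ht0)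
    have h3 := h1.mul h2
    have heq : rho μ k = fun t => t ^ a * besselK ν (phik k t) := rfl
    rw [heq]
    exact h3.congr_deriv (by ring)
  refine ⟨fun t ht => (hrho t ht).differentiableAt, ?_⟩
  have hφtop : Filter.Tendsto (phik k) atTop atTop := by
    have h := (tendsto_rpow_atTop h1k).atTop_div_const h1k
    exact h
  have hratio := (my_ratio ν).comp hφtop
  have hpow : Filter.Tendsto (fun t : ℝ => a * t ^ (k-1)) atTop (nhds 0) := by
    have h := tendsto_rpow_neg_atTop (y := 1-k) h1k
    have h' : Filter.Tendsto (fun t : ℝ => t ^ (k-1)) atTop (nhds 0) := by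
      have : (fun t : ℝ => t ^ (k-1)) = fun t : ℝ => t ^ (-(1-k)) := by
        funext t; congr 1; ring
      rw [this]; exact h
    simpa using h'.const_mul a
  have hE : Filter.Tendsto
      (fun t => a * t ^ (k-1) - besselKD ν (phik k t) / besselK ν (phik k t))
      atTop (nhds (0 - 1)) := hpow.sub hratio
  rw [zero_sub] at hE
  apply hE.congr'
  filter_upwards [eventually_ge_atTop (1:ℝ)] with t ht
  have ht0 : (0:ℝ) < t := lt_of_lt_of_le one_pos ht
  have hK : 0 < besselK ν (phik k t) := my_besselK_pos ν (hφpos t ht)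
  have hd : deriv (rho μ k) t = a * t ^ (a-1) * besselK ν (phik k t)
      - t ^ a * besselKD ν (phik k t) * t ^ (-k) := (hrho t ht).deriv
  have hrhoeq : rho μ k t = t ^ a * besselK ν (phik k t) := rfl
  have hta : (0:ℝ) < t ^ a := Real.rpow_pos_of_pos ht0 a
  set K : ℝ := besselK ν (phik k t)
  set K' : ℝ := besselKD ν (phik k t)
  have e1 : t ^ k * t ^ (a-1) = t ^ a * t ^ (k-1) := by
    rw [← Real.rpow_add ht0, ← Real.rpow_add ht0]; congr 1; ring
  have e2 : t ^ k * t ^ (-k) = 1 := by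
    rw [← Real.rpow_add ht0]; simp
  have enum : t ^ k * (a * t ^ (a-1) * K - t ^ a * K' * t ^ (-k))
      = t ^ a * (a * t ^ (k-1) * K - K') := by
    calc t ^ k * (a * t ^ (a-1) * K - t ^ a * K' * t ^ (-k))
        = a * (t ^ k * t ^ (a-1)) * K - t ^ a * K' * (t ^ k * t ^ (-k)) := by ring
      _ = t ^ a * (a * t ^ (k-1) * K - K') := by rw [e1, e2]; ring
  rw [hd, hrhoeq, enum, mul_div_mul_left _ _ hta.ne', sub_div, mul_div_assoc,
    div_self hK.ne', mul_one]
end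

section
/- Let N ≥ 2, μ ≥ 0, k ∈ [0,1), R > 0 and r > 1. There exists a constant C = C(N,μ,R,k,r) > 0 such that for all t ≥ 1: ∫_{|x| ≤ φ_k(t)+R} (ψ(x,t))^r dx ≤ C ρ(t)^r e^{r φ_k(t)} (1 + φ_k(t))^{(2−r)(N−1)/2}. -/
open MeasureTheory Real Set
open scoped Pointwise ENNReal NNReal

section AuxPsiEstimate

lemma poly_le_exp' {b γ : ℝ} (hb : 0 < b) :
    ∃ C > 0, ∀ a : ℝ, 0 ≤ a → (1+a) ^ γ ≤ C * Real.exp (b*a) := by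
  set m := ⌈γ⌉₊ with hm
  refine ⟨(m.factorial : ℝ) * Real.exp b / b ^ m, by positivity, fun a ha => ?_⟩
  have h1a : (1:ℝ) ≤ 1 + a := by linarith
  have h1 : (1+a) ^ γ ≤ (1+a) ^ (m:ℝ) :=
    Real.rpow_le_rpow_of_exponent_le h1a (Nat.le_ceil γ)
  rw [Real.rpow_natCast] at h1
  have h2 : (b*(1+a)) ^ m / (m.factorial : ℝ) ≤ Real.exp (b*(1+a)) :=
    Real.pow_div_factorial_le_exp _ (by positivity) m
  have h3 : (1+a)^m ≤ (m.factorial : ℝ) * Real.exp (b*(1+a)) / b ^ m := by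
    rw [mul_pow] at h2
    rw [div_le_iff₀ (by positivity)] at h2
    rw [le_div_iff₀ (by positivity)]
    calc (1+a)^m * b^m = b ^ m * (1+a)^m := by ring
    _ ≤ Real.exp (b*(1+a)) * (m.factorial : ℝ) := h2
    _ = (m.factorial : ℝ) * Real.exp (b*(1+a)) := by ring
  refine h1.trans (h3.trans (le_of_eq ?_))
  rw [mul_add, mul_one, Real.exp_add]
  ring

lemma sum_layers_bound {β : ℝ} (hβ : 0 ≤ β) :
    ∃ D > 0, ∀ J : ℕ, ∑ j ∈ Finset.range J, ((j:ℝ)+1) ^ β * Real.exp (-(j:ℝ)) ≤ D := by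
  set m := ⌈β⌉₊ with hm
  have hsum : Summable (fun n : ℕ => (n:ℝ)^m * Real.exp (-1) ^ n) :=
    summable_pow_mul_geometric_of_norm_lt_one m
      (by rw [Real.norm_eq_abs, abs_of_pos (Real.exp_pos _)]; exact Real.exp_lt_one_iff.2 (by norm_num))
  have hsum2 : Summable (fun j : ℕ => Real.exp 1 * (((j:ℝ)+1)^m * Real.exp (-1) ^ (j+1))) := by
    have := (summable_nat_add_iff 1).2 hsum
    simpa [Nat.cast_add] using this.mul_left (Real.exp 1)
  refine ⟨∑' j : ℕ, Real.exp 1 * (((j:ℝ)+1)^m * Real.exp (-1) ^ (j+1)), ?_, fun J => ?_⟩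
  · have h0 : (0:ℝ) < Real.exp 1 * (((0:ℝ)+1)^m * Real.exp (-1) ^ (0+1)) := by positivity
    refine lt_of_lt_of_le h0 ?_
    exact_mod_cast Summable.le_tsum hsum2 0 (fun i _ => by positivity)
  · refine (Finset.sum_le_sum fun j _ => ?_).trans
      (Summable.sum_le_tsum _ (fun i _ => by positivity) hsum2)
    have h1 : ((j:ℝ)+1) ^ β ≤ ((j:ℝ)+1)^(m:ℝ) :=
      Real.rpow_le_rpow_of_exponent_le (by linarith [Nat.cast_nonneg (α := ℝ) j]) (Nat.le_ceil β)
    rw [Real.rpow_natCast] at h1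
    have h2 : Real.exp (-(j:ℝ)) = Real.exp 1 * Real.exp (-1) ^ (j+1) := by
      rw [← Real.exp_nat_mul, ← Real.exp_add]
      norm_num
    rw [h2]
    have := mul_le_mul_of_nonneg_right h1 (le_of_lt (by positivity : (0:ℝ) < Real.exp 1 * Real.exp (-1)^(j+1)))
    calc ((j:ℝ)+1) ^ β * (Real.exp 1 * Real.exp (-1) ^ (j+1)) ≤ ((j:ℝ)+1)^m * (Real.exp 1 * Real.exp (-1)^(j+1)) := this
    _ = Real.exp 1 * (((j:ℝ)+1)^m * Real.exp (-1)^(j+1)) := by ring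

lemma radial_bound' {r' γ : ℝ} (hr : 0 < r') :
    ∃ C > 0, ∀ M : ℝ, 1 ≤ M →
      (∫ y in Ioc (0:ℝ) M, Real.exp (r'*y) * (1+y) ^ γ) ≤
        C * (Real.exp (r'*M) * (1+M) ^ γ) := by
  set H : ℝ → ℝ := fun y => Real.exp (r'*y) * (1+y) ^ γ with hH
  have hexpcont : Continuous (fun y : ℝ => Real.exp (r'*y)) :=
    Real.continuous_exp.comp (continuous_const.mul continuous_id)
  have hcontAt : ∀ x : ℝ, -1 < x → ContinuousAt H x := by
    intro x hx
    have hx1 : (1:ℝ) + x ≠ 0 := by intro h; linarith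
    have h2 : ContinuousAt (fun y : ℝ => (1+y) ^ γ) x :=
      ContinuousAt.rpow_const ((continuous_const.add continuous_id).continuousAt) (Or.inl hx1)
    exact hexpcont.continuousAt.mul h2
  have hcontOn : ∀ s : Set ℝ, s ⊆ Ici 0 → ContinuousOn H s := fun s hs =>
    fun x hx => (hcontAt x (by have := hs hx; simp at this; linarith)).continuousWithinAt
  have hInt : ∀ X : ℝ, 0 ≤ X → IntegrableOn H (Ioc 0 X) := by
    intro X hX
    exact ((hcontOn (Icc 0 X) (fun y hy => hy.1)).integrableOn_compact isCompact_Icc).mono_set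
      Ioc_subset_Icc_self
  have hHnonneg : ∀ y : ℝ, 0 ≤ y → 0 ≤ H y := by
    intro y hy
    have h1 : (0:ℝ) < 1 + y := by linarith
    have : 0 ≤ (1+y) ^ γ := (Real.rpow_pos_of_pos h1 γ).le
    simp only [hH]
    positivity
  -- lower bound c₀
  obtain ⟨c₀, hc₀, hc₀le⟩ : ∃ c₀ > 0, ∀ M : ℝ, 1 ≤ M → c₀ ≤ Real.exp (r'*M) * (1+M) ^ γ := by
    rcases le_or_gt 0 γ with hγ | hγ
    · refine ⟨1, one_pos, fun M hM => ?_⟩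
      have h1 : (1:ℝ) ≤ Real.exp (r'*M) := Real.one_le_exp (by positivity)
      have h2 : (1:ℝ) ≤ (1+M) ^ γ := Real.one_le_rpow (by linarith) hγ
      nlinarith
    · obtain ⟨C₀, hC₀, hC₀le⟩ := poly_le_exp' (γ := -γ) hr
      refine ⟨C₀⁻¹, by positivity, fun M hM => ?_⟩
      have hp : (0:ℝ) < (1+M) ^ (-γ) := Real.rpow_pos_of_pos (by linarith) _
      have h := hC₀le M (by linarith)
      have hMγ : (1+M) ^ γ = ((1+M) ^ (-γ))⁻¹ := by
        rw [← Real.rpow_neg (by linarith : (0:ℝ) ≤ 1+M), neg_neg]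
      rw [hMγ, ← div_eq_mul_inv, le_div_iff₀ hp]
      calc C₀⁻¹ * (1+M) ^ (-γ) ≤ C₀⁻¹ * (C₀ * Real.exp (r'*M)) :=
            mul_le_mul_of_nonneg_left h (by positivity)
      _ = Real.exp (r'*M) := by field_simp
  set y₁ : ℝ := max 1 (2*|γ|/r') with hy₁def
  have hy₁1 : (1:ℝ) ≤ y₁ := le_max_left _ _
  have hy₁γ : 2*|γ|/r' ≤ y₁ := le_max_right _ _
  set C₁ : ℝ := ∫ y in Ioc (0:ℝ) y₁, H y with hC₁def
  have hC₁nonneg : 0 ≤ C₁ := setIntegral_nonneg measurableSet_Ioc (fun y hy => hHnonneg y hy.1.le)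
  refine ⟨C₁/c₀ + 2/r',
    add_pos_of_nonneg_of_pos (div_nonneg hC₁nonneg hc₀.le) (by positivity), fun M hM => ?_⟩
  have hHM : 0 ≤ H M := hHnonneg M (by linarith)
  have key : (∫ y in Ioc (0:ℝ) M, H y) ≤ C₁ + (2/r') * H M := by
    rcases le_or_gt M y₁ with hcase | hcase
    · have h1 : (∫ y in Ioc (0:ℝ) M, H y) ≤ C₁ := by
        refine setIntegral_mono_set (hInt y₁ (by linarith)) ?_ ?_
        · filter_upwards [ae_restrict_mem measurableSet_Ioc] with y hy
          exact hHnonneg y hy.1.le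
        · exact HasSubset.Subset.eventuallyLE (Ioc_subset_Ioc_right hcase)
      have h2 : 0 ≤ (2/r') * H M := mul_nonneg (by positivity) hHM
      linarith
    · have hsplit : (∫ y in Ioc (0:ℝ) M, H y) = C₁ + ∫ y in Ioc y₁ M, H y := by
        rw [hC₁def, ← setIntegral_union (Set.Ioc_disjoint_Ioc_of_le le_rfl) measurableSet_Ioc
          (hInt y₁ (by linarith)) (((hcontOn (Icc y₁ M) (fun y hy => le_trans (by linarith) hy.1)).integrableOn_compact
            isCompact_Icc).mono_set Ioc_subset_Icc_self),
          Set.Ioc_union_Ioc_eq_Ioc (by linarith) hcase.le]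
      rw [hsplit]
      have hmid : (∫ y in Ioc y₁ M, H y) ≤ (2/r') * H M := by
        set H' : ℝ → ℝ := fun x =>
          Real.exp (r'*x) * r' * (1+x) ^ γ + Real.exp (r'*x) * (γ * (1+x) ^ (γ-1) * 1) with hH'
        have hderiv : ∀ x ∈ uIcc y₁ M, HasDerivAt H (H' x) x := by
          intro x hx
          rw [uIcc_of_le hcase.le] at hx
          have hx1 : (0:ℝ) < 1 + x := by have := hx.1; linarith
          have h1 : HasDerivAt (fun y : ℝ => Real.exp (r'*y)) (Real.exp (r'*x) * r') x := by
            simpa using ((hasDerivAt_id x).const_mul r').exp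
          have hbase : HasDerivAt (fun y : ℝ => 1 + y) 1 x := by
            simpa using (hasDerivAt_id x).const_add (1:ℝ)
          have h2 : HasDerivAt (fun y : ℝ => (1+y) ^ γ) (γ * (1+x) ^ (γ-1) * 1) x := by
            have := hbase.rpow_const (p := γ) (Or.inl hx1.ne')
            convert this using 1
            ring
          exact h1.mul h2
        have hcont' : ContinuousOn H' (uIcc y₁ M) := by
          rw [uIcc_of_le hcase.le]
          intro x hx
          have hx1 : (0:ℝ) < 1 + x := by have := hx.1; linarith
          have h2 : ContinuousAt (fun y : ℝ => (1+y) ^ γ) x :=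
            ContinuousAt.rpow_const ((continuous_const.add continuous_id).continuousAt)
              (Or.inl hx1.ne')
          have h3 : ContinuousAt (fun y : ℝ => (1+y) ^ (γ-1)) x :=
            ContinuousAt.rpow_const ((continuous_const.add continuous_id).continuousAt)
              (Or.inl hx1.ne')
          exact (((hexpcont.continuousAt.mul continuousAt_const).mul h2).add
            (hexpcont.continuousAt.mul ((h3.const_mul γ).mul continuousAt_const))).continuousWithinAt
        have hII : IntervalIntegrable H' volume y₁ M := hcont'.intervalIntegrable
        have hftc : (∫ x in y₁..M, H' x) = H M - H y₁ :=
          intervalIntegral.integral_eq_sub_of_hasDerivAt hderiv hII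
        have hHII : IntervalIntegrable H volume y₁ M := by
          apply ContinuousOn.intervalIntegrable
          rw [uIcc_of_le hcase.le]
          exact hcontOn (Icc y₁ M) (fun y hy => le_trans (by linarith) hy.1)
        have hpt : ∀ x ∈ Icc y₁ M, (r'/2) * H x ≤ H' x := by
          intro x hx
          have hx1 : (0:ℝ) < 1 + x := by have := hx.1; linarith
          have hP : (0:ℝ) < (1+x) ^ (γ-1) := Real.rpow_pos_of_pos hx1 _
          have hE : (0:ℝ) < Real.exp (r'*x) := Real.exp_pos _
          have hfac : (1+x) ^ γ = (1+x) ^ (γ-1) * (1+x) := by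
            rw [Real.rpow_sub_one hx1.ne']
            field_simp
          have hlin : 0 ≤ (r'/2) * (1+x) + γ := by
            have h1 : 2*|γ|/r' ≤ 1 + x := by have := hx.1; linarith
            have h2 : 2*|γ| ≤ r' * (1+x) := by
              rw [div_le_iff₀ hr] at h1; linarith
            have := neg_abs_le γ
            linarith
          simp only [hH, hH', hfac]
          nlinarith [mul_nonneg (mul_nonneg hE.le hP.le) hlin]
        have hmono : (∫ x in y₁..M, (r'/2) * H x) ≤ ∫ x in y₁..M, H' x :=
          intervalIntegral.integral_mono_on hcase.le (hHII.const_mul _) hII hpt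
        rw [intervalIntegral.integral_const_mul, hftc] at hmono
        have hHy₁ : 0 ≤ H y₁ := hHnonneg y₁ (by linarith)
        have hIoc : (∫ x in y₁..M, H x) = ∫ y in Ioc y₁ M, H y :=
          intervalIntegral.integral_of_le hcase.le
        rw [hIoc] at hmono
        have h2 : (r'/2) * (∫ y in Ioc y₁ M, H y) ≤ H M := by linarith
        calc (∫ y in Ioc y₁ M, H y) = (2/r') * ((r'/2) * (∫ y in Ioc y₁ M, H y)) := by
              field_simp
        _ ≤ (2/r') * H M := mul_le_mul_of_nonneg_left h2 (by positivity)
      linarith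
  have hc : C₁ ≤ (C₁/c₀) * H M := by
    have h1 : c₀ ≤ H M := hc₀le M hM
    calc C₁ = (C₁/c₀) * c₀ := (div_mul_cancel₀ _ hc₀.ne').symm
    _ ≤ (C₁/c₀) * H M := mul_le_mul_of_nonneg_left h1 (div_nonneg hC₁nonneg hc₀.le)
  calc (∫ y in Ioc (0:ℝ) M, H y) ≤ C₁ + (2/r') * H M := key
  _ ≤ (C₁/c₀) * H M + (2/r') * H M := by linarith
  _ = (C₁/c₀ + 2/r') * (Real.exp (r'*M) * (1+M) ^ γ) := by simp only [hH]; ring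

set_option maxHeartbeats 1000000 in
lemma cap_bound (N : ℕ) (hN : 2 ≤ N) :
    ∃ C > 0, ∀ e : EuclideanSpace ℝ (Fin N), ‖e‖ = 1 → ∀ δ : ℝ, 0 < δ →
      (((volume : Measure (EuclideanSpace ℝ (Fin N))).toSphere)
        {ω : Metric.sphere (0 : EuclideanSpace ℝ (Fin N)) 1 |
          1 - δ ≤ (inner ℝ e (ω : EuclideanSpace ℝ (Fin N)) : ℝ)}).toReal
        ≤ C * δ ^ (((N:ℝ)-1)/2) := by
  set E := EuclideanSpace ℝ (Fin N)
  set σ := (volume : Measure E).toSphere with hσ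
  set β := ((N:ℝ)-1)/2 with hβ
  have hN1 : (2:ℝ) ≤ (N:ℝ) := by exact_mod_cast hN
  have hβ0 : 0 ≤ β := by rw [hβ]; linarith
  set A := (σ univ).toReal with hA
  have hA0 : 0 ≤ A := ENNReal.toReal_nonneg
  set B : ℝ := (N : ℝ) * (2*Real.sqrt 2) ^ (N-1) with hB
  have hB0 : 0 ≤ B := by positivity
  refine ⟨B + A + 1, by positivity, fun e he δ hδ => ?_⟩
  have hδβpos : 0 < δ ^ β := Real.rpow_pos_of_pos hδ _
  set S : Set (Metric.sphere (0:E) 1) :=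
    {ω : Metric.sphere (0:E) 1 | 1 - δ ≤ (inner ℝ e (ω : E) : ℝ)} with hS
  have hSmeas : MeasurableSet S := by
    have hcont : Continuous fun ω : Metric.sphere (0:E) 1 => (inner ℝ e (ω : E) : ℝ) :=
      Continuous.inner continuous_const continuous_subtype_val
    exact (isClosed_Ici.preimage hcont).measurableSet
  rcases le_or_gt δ 1 with hδ1 | hδ1
  · -- main case
    set i0 : Fin N := ⟨0, by omega⟩ with hi0
    have hcard : Module.finrank ℝ E = Fintype.card (Fin N) := by
      simp [E, finrank_euclideanSpace_fin]
    have hortho : Orthonormal ℝ (({i0} : Set (Fin N)).restrict (fun _ => e)) := by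
      constructor
      · intro i; exact he
      · intro i j hij
        exact absurd (Subtype.ext ((mem_singleton_iff.1 i.2).trans
          (mem_singleton_iff.1 j.2).symm)) hij
    obtain ⟨b, hb⟩ := hortho.exists_orthonormalBasis_extension_of_card_eq hcard
    have hbe : b i0 = e := hb i0 rfl
    set s : ℝ := Real.sqrt (2*δ) with hs
    have hs0 : 0 ≤ s := Real.sqrt_nonneg _
    set Box : Set (Fin N → ℝ) :=
      Set.univ.pi (fun i => if i = i0 then Icc (0:ℝ) 1 else Icc (-s) s) with hBox
    have hBoxMeas : MeasurableSet Box :=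
      MeasurableSet.univ_pi (fun i => by split <;> exact measurableSet_Icc)
    set T := (MeasurableEquiv.toLp 2 (Fin N → ℝ)).symm with hT
    set Abox : Set E := ⇑b.repr ⁻¹' (⇑T ⁻¹' Box) with hAbox
    have hsub : Ioo (0:ℝ) 1 • (Subtype.val '' S) ⊆ Abox := by
      rintro z hz
      rw [Set.mem_smul] at hz
      obtain ⟨c, hc, y, hy, rfl⟩ := hz
      obtain ⟨ω, hω, rfl⟩ := hy
      have hωn : ‖(ω : E)‖ = 1 := by
        have := ω.2
        rwa [mem_sphere_zero_iff_norm] at this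
      set t : ℝ := (inner ℝ e (ω : E) : ℝ) with ht
      have hωt : 1 - δ ≤ t := hω
      have ht1 : |t| ≤ 1 := by
        have := abs_real_inner_le_norm e (ω : E)
        rwa [he, hωn, one_mul] at this
      have htu : t ≤ 1 := (abs_le.1 ht1).2
      have htl : -1 ≤ t := (abs_le.1 ht1).1
      have hc0 : 0 < c := hc.1
      have hc1 : c < 1 := hc.2
      set w := b.repr (c • (ω : E)) with hw
      have hwi : ∀ i, w i = (inner ℝ (b i) (c • (ω : E)) : ℝ) := fun i =>
        b.repr_apply_apply _ i
      have hwi0 : w i0 = c * t := by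
        rw [hwi i0, hbe, real_inner_smul_right]
      have hnormw : ∑ j, (w j)^2 = c^2 := by
        have h1 : ‖w‖ = ‖c • (ω : E)‖ := b.repr.norm_map _
        have h2 : ‖c • (ω : E)‖ = c := by
          rw [norm_smul, hωn, mul_one, Real.norm_eq_abs, abs_of_pos hc0]
        have h3 : ‖w‖ = Real.sqrt (∑ j, ‖w j‖^2) := EuclideanSpace.norm_eq w
        have h4 : ∑ j, ‖w j‖^2 = ∑ j, (w j)^2 := by
          congr 1; ext j; rw [Real.norm_eq_abs, sq_abs]
        have h5 : Real.sqrt (∑ j, (w j)^2) = c := by rw [← h4, ← h3, h1, h2]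
        have := congrArg (fun x => x^2) h5
        simpa [Real.sq_sqrt (Finset.sum_nonneg fun j _ => sq_nonneg (w j))] using this
      intro i _
      show w i ∈ (if i = i0 then Icc (0:ℝ) 1 else Icc (-s) s)
      by_cases hii : i = i0
      · rw [if_pos hii, hii, hwi0]
        constructor
        · have h0t : 0 ≤ t := by linarith
          positivity
        · have h0t : 0 ≤ t := by linarith
          nlinarith
      · rw [if_neg hii]
        have hpair : (w i)^2 + (w i0)^2 ≤ ∑ j, (w j)^2 := by
          have := Finset.sum_le_sum_of_subset_of_nonneg
            (Finset.subset_univ ({i, i0} : Finset (Fin N)))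
            (fun j _ _ => sq_nonneg (w j))
          rwa [Finset.sum_pair hii] at this
        have hsq : (w i)^2 ≤ 2*δ := by
          rw [hnormw, hwi0] at hpair
          have hc2 : c^2 ≤ 1 := by nlinarith
          have h1t2 : 0 ≤ 1 - t^2 := by nlinarith
          have e1 : c^2 - (c*t)^2 = c^2*(1-t^2) := by ring
          have e2 : c^2*(1-t^2) ≤ 1*(1-t^2) := mul_le_mul_of_nonneg_right hc2 h1t2
          have e3 : (1-t)*(1+t) ≤ δ*2 :=
            mul_le_mul (by linarith) (by linarith) (by linarith) hδ.le
          nlinarith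
        have habs : |w i| ≤ s := by
          rw [← Real.sqrt_sq_eq_abs, hs]
          exact Real.sqrt_le_sqrt hsq
        exact abs_le.1 habs
    have hTBoxMeas : MeasurableSet (⇑T ⁻¹' Box) := T.measurable hBoxMeas
    have hvolBox : volume Abox = ENNReal.ofReal 1 * (ENNReal.ofReal (2*s)) ^ (N-1) := by
      rw [hAbox]
      rw [(b.measurePreserving_repr).measure_preimage hTBoxMeas.nullMeasurableSet]
      rw [(EuclideanSpace.volume_preserving_symm_measurableEquiv_toLp (Fin N)).measure_preimage
        hBoxMeas.nullMeasurableSet]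
      rw [hBox, volume_pi_pi]
      have hval : ∀ j : Fin N, volume (if j = i0 then Icc (0:ℝ) 1 else Icc (-s) s)
          = if j = i0 then ENNReal.ofReal 1 else ENNReal.ofReal (2*s) := by
        intro j
        by_cases hj : j = i0
        · rw [if_pos hj, if_pos hj, Real.volume_Icc]; norm_num
        · rw [if_neg hj, if_neg hj, Real.volume_Icc]; congr 1; ring
      rw [Finset.prod_congr rfl (fun j _ => hval j)]
      rw [← Finset.mul_prod_erase Finset.univ _ (Finset.mem_univ i0), if_pos rfl]
      have hconst : ∀ j ∈ Finset.univ.erase i0,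
          (if j = i0 then ENNReal.ofReal 1 else ENNReal.ofReal (2*s)) = ENNReal.ofReal (2*s) :=
        fun j hj => if_neg (Finset.mem_erase.1 hj).1
      rw [Finset.prod_congr rfl hconst, Finset.prod_const,
        Finset.card_erase_of_mem (Finset.mem_univ i0), Finset.card_univ, Fintype.card_fin]
    have htos : σ S = (N : ℝ≥0∞) * volume (Ioo (0:ℝ) 1 • (Subtype.val '' S)) := by
      rw [hσ, Measure.toSphere_apply' _ hSmeas, hcard, Fintype.card_fin]
    have hmono : σ S ≤ (N : ℝ≥0∞) * volume Abox := by
      rw [htos]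
      exact mul_le_mul_right (measure_mono hsub) _
    have hfin : (N : ℝ≥0∞) * volume Abox ≠ ⊤ := by
      rw [hvolBox]
      exact ENNReal.mul_ne_top (ENNReal.natCast_ne_top N)
        (ENNReal.mul_ne_top ENNReal.ofReal_ne_top (ENNReal.pow_ne_top ENNReal.ofReal_ne_top))
    have h1 : (σ S).toReal ≤ ((N : ℝ≥0∞) * volume Abox).toReal :=
      ENNReal.toReal_mono hfin hmono
    have h2 : ((N : ℝ≥0∞) * volume Abox).toReal = (N:ℝ) * (2*s)^(N-1) := by
      rw [hvolBox, ENNReal.toReal_mul, ENNReal.toReal_mul, ENNReal.toReal_pow,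
        ENNReal.toReal_ofReal (by linarith : (0:ℝ) ≤ 2*s),
        ENNReal.toReal_ofReal (by norm_num : (0:ℝ) ≤ 1)]
      simp
    have h3 : (2*s)^(N-1) = (2*Real.sqrt 2)^(N-1) * δ ^ β := by
      have hsplit : 2*s = (2*Real.sqrt 2) * Real.sqrt δ := by
        rw [hs, Real.sqrt_mul (by norm_num : (0:ℝ) ≤ 2)]
        ring
      rw [hsplit, mul_pow]
      congr 1
      rw [Real.sqrt_eq_rpow, ← Real.rpow_natCast (δ ^ (1/2 : ℝ)) (N-1),
        ← Real.rpow_mul hδ.le]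
      congr 1
      rw [hβ, Nat.cast_sub (by omega : 1 ≤ N)]
      push_cast
      ring
    calc (σ S).toReal ≤ (N:ℝ) * (2*s)^(N-1) := h1.trans_eq h2
    _ = B * δ ^ β := by rw [h3, hB]; ring
    _ ≤ (B + A + 1) * δ ^ β := by nlinarith [hδβpos, hA0]
  · have h1 : (σ S).toReal ≤ A := ENNReal.toReal_mono (measure_ne_top _ _)
      (measure_mono (subset_univ _))
    have h2 : (1:ℝ) ≤ δ ^ β := Real.one_le_rpow hδ1.le hβ0
    calc (σ S).toReal ≤ A := h1
    _ = A * 1 := by ring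
    _ ≤ (B + A + 1) * δ ^ β := by nlinarith [hδβpos, hB0, hA0]

set_option maxHeartbeats 1000000 in
lemma sphInt_bound (N : ℕ) (hN : 2 ≤ N) :
    ∃ C > 0, ∀ x : EuclideanSpace ℝ (Fin N),
      sphInt N x ≤ C * (Real.exp ‖x‖ * (1 + ‖x‖) ^ (-(((N:ℝ)-1)/2))) := by
  set E := EuclideanSpace ℝ (Fin N)
  set σ := (volume : Measure E).toSphere with hσ
  set β := ((N:ℝ)-1)/2 with hβ
  have hN1 : (2:ℝ) ≤ (N:ℝ) := by exact_mod_cast hN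
  have hβ0 : 0 ≤ β := by rw [hβ]; linarith
  obtain ⟨C₁, hC₁, hcap⟩ := cap_bound N hN
  obtain ⟨D, hD, hDsum⟩ := sum_layers_bound hβ0
  obtain ⟨C₀, hC₀, hC₀le⟩ := poly_le_exp' (b := 1) (γ := β) one_pos
  set A := (σ univ).toReal with hA
  have hA0 : 0 ≤ A := ENNReal.toReal_nonneg
  have h2β : (0:ℝ) < 2 ^ β := Real.rpow_pos_of_pos (by norm_num) _
  refine ⟨A*C₀ + A*2^β + C₁*D*2^β + 1, by positivity, fun x => ?_⟩
  set a := ‖x‖ with ha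
  have ha0 : 0 ≤ a := norm_nonneg x
  have h1a : (0:ℝ) < 1 + a := by linarith
  have hEpos : (0:ℝ) < Real.exp a * (1+a) ^ (-β) :=
    mul_pos (Real.exp_pos _) (Real.rpow_pos_of_pos h1a _)
  have hinv : (1+a) ^ β * (1+a) ^ (-β) = 1 := by
    rw [← Real.rpow_add h1a]; simp
  -- trivial bound
  have htriv : sphInt N x ≤ A * Real.exp a := by
    rw [sphInt]
    have hint : Integrable (fun _ : Metric.sphere (0:E) 1 => Real.exp a) σ :=
      integrable_const _
    have hle : ∀ ω : Metric.sphere (0:E) 1,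
        Real.exp ((inner ℝ x (ω : E) : ℝ)) ≤ Real.exp a := by
      intro ω
      apply Real.exp_le_exp.2
      have h1 := abs_real_inner_le_norm x (ω : E)
      have hωn : ‖(ω : E)‖ = 1 := by
        have := ω.2; rwa [mem_sphere_zero_iff_norm] at this
      rw [hωn, mul_one] at h1
      exact (abs_le.1 h1).2.trans (le_refl _)
    calc (∫ ω : Metric.sphere (0:E) 1, Real.exp ((inner ℝ x (ω : E) : ℝ)) ∂σ)
        ≤ ∫ _ : Metric.sphere (0:E) 1, Real.exp a ∂σ :=
          integral_mono_of_nonneg (Filter.Eventually.of_forall fun ω => (Real.exp_pos _).le)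
            hint (Filter.Eventually.of_forall hle)
    _ = A * Real.exp a := by rw [integral_const, smul_eq_mul]; rfl
  rcases le_or_gt a 1 with hcase | hcase
  · -- small a
    have hb2 : (1+a) ^ β ≤ 2 ^ β := Real.rpow_le_rpow (by linarith) (by linarith) hβ0
    calc sphInt N x ≤ A * Real.exp a := htriv
    _ = (A * (1+a)^β) * (Real.exp a * (1+a)^(-β)) := by
        rw [show (A * (1+a)^β) * (Real.exp a * (1+a)^(-β))
          = A * Real.exp a * ((1+a)^β * (1+a)^(-β)) by ring, hinv, mul_one]
    _ ≤ (A * 2^β) * (Real.exp a * (1+a)^(-β)) := by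
        apply mul_le_mul_of_nonneg_right _ hEpos.le
        exact mul_le_mul_of_nonneg_left hb2 hA0
    _ ≤ (A*C₀ + A*2^β + C₁*D*2^β + 1) * (Real.exp a * (1+a)^(-β)) := by
        apply mul_le_mul_of_nonneg_right _ hEpos.le
        nlinarith [mul_nonneg hA0 hC₀.le, mul_nonneg (mul_nonneg hC₁.le hD.le) h2β.le]
  · -- large a
    have ha1 : (0:ℝ) < a := by linarith
    set e : E := a⁻¹ • x with he'
    have he : ‖e‖ = 1 := by
      rw [he', norm_smul, Real.norm_eq_abs, abs_of_pos (by positivity), ← ha]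
      field_simp
    have hxe : x = a • e := by
      rw [he', smul_smul, mul_inv_cancel₀ ha1.ne', one_smul]
    have hinner : ∀ ω : Metric.sphere (0:E) 1,
        (inner ℝ x (ω : E) : ℝ) = a * (inner ℝ e (ω : E) : ℝ) := by
      intro ω
      rw [hxe, real_inner_smul_left]
    set J := ⌈2*a⌉₊ + 1 with hJ
    set capS : ℕ → Set (Metric.sphere (0:E) 1) :=
      fun j => {ω : Metric.sphere (0:E) 1 | 1 - ((j:ℝ)+1)/a ≤ (inner ℝ e (ω : E) : ℝ)} with hcapS
    have hcapMeas : ∀ j, MeasurableSet (capS j) := by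
      intro j
      have hcont : Continuous fun ω : Metric.sphere (0:E) 1 => (inner ℝ e (ω : E) : ℝ) :=
        Continuous.inner continuous_const continuous_subtype_val
      exact (isClosed_Ici.preimage hcont).measurableSet
    set F : Metric.sphere (0:E) 1 → ℝ := fun ω => Real.exp (-a) +
      ∑ j ∈ Finset.range J, Set.indicator (capS j) (fun _ => Real.exp (a - (j:ℝ))) ω with hF
    have hpt : ∀ ω : Metric.sphere (0:E) 1, Real.exp ((inner ℝ x (ω : E) : ℝ)) ≤ F ω := by
      intro ω
      rw [hinner ω]
      set u : ℝ := (inner ℝ e (ω : E) : ℝ) with hu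
      have hωn : ‖(ω : E)‖ = 1 := by
        have := ω.2; rwa [mem_sphere_zero_iff_norm] at this
      have hu1 : |u| ≤ 1 := by
        have := abs_real_inner_le_norm e (ω : E)
        rwa [he, hωn, one_mul] at this
      have huu : u ≤ 1 := (abs_le.1 hu1).2
      have hul : -1 ≤ u := (abs_le.1 hu1).1
      have hnn : 0 ≤ a * (1-u) := by nlinarith
      set j : ℕ := ⌊a * (1-u)⌋₊ with hj
      have hjJ : j < J := by
        have h1 : a * (1-u) < J := by
          have h2 : a * (1-u) ≤ 2*a := by nlinarith
          have h3 : (2*a : ℝ) ≤ ⌈2*a⌉₊ := Nat.le_ceil _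
          have h4 : ((⌈2*a⌉₊ : ℝ)) < J := by rw [hJ]; push_cast; linarith
          linarith
        exact (Nat.floor_lt hnn).2 h1
      have hjle : (j:ℝ) ≤ a * (1-u) := Nat.floor_le hnn
      have hmem : ω ∈ capS j := by
        have h1 : a * (1-u) < (j:ℝ) + 1 := Nat.lt_floor_add_one _
        have h2 : 1 - u < ((j:ℝ)+1)/a := by
          rw [lt_div_iff₀ ha1]; nlinarith
        show 1 - ((j:ℝ)+1)/a ≤ u
        linarith
      have hval : Real.exp (a * u) ≤ Real.exp (a - (j:ℝ)) := by
        apply Real.exp_le_exp.2; nlinarith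
      have hterm : Real.exp (a - (j:ℝ)) =
          Set.indicator (capS j) (fun _ => Real.exp (a - (j:ℝ))) ω := by
        rw [Set.indicator_of_mem hmem]
      have hsum : Set.indicator (capS j) (fun _ => Real.exp (a - (j:ℝ))) ω ≤
          ∑ j' ∈ Finset.range J, Set.indicator (capS j') (fun _ => Real.exp (a - (j':ℝ))) ω :=
        Finset.single_le_sum
          (f := fun j' : ℕ => Set.indicator (capS j') (fun _ => Real.exp (a - (j':ℝ))) ω)
          (fun j' _ => Set.indicator_nonneg (fun _ _ => (Real.exp_pos _).le) ω)
          (Finset.mem_range.2 hjJ)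
      have hexpa : (0:ℝ) ≤ Real.exp (-a) := (Real.exp_pos _).le
      rw [hF]
      calc Real.exp (a*u) ≤ Real.exp (a - (j:ℝ)) := hval
      _ = Set.indicator (capS j) (fun _ => Real.exp (a - (j:ℝ))) ω := hterm
      _ ≤ ∑ j' ∈ Finset.range J, Set.indicator (capS j') (fun _ => Real.exp (a - (j':ℝ))) ω := hsum
      _ ≤ _ := by simp only []; linarith
    have hFint : Integrable F σ := by
      apply Integrable.add (integrable_const _)
      apply integrable_finset_sum
      intro j _
      exact (integrable_const _).indicator (hcapMeas j)
    have hIineq : sphInt N x ≤ ∫ ω, F ω ∂σ := by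
      rw [sphInt]
      exact integral_mono_of_nonneg (Filter.Eventually.of_forall fun ω => (Real.exp_pos _).le)
        hFint (Filter.Eventually.of_forall hpt)
    have hFval : (∫ ω, F ω ∂σ) = Real.exp (-a) * A +
        ∑ j ∈ Finset.range J, Real.exp (a - (j:ℝ)) * (σ (capS j)).toReal := by
      rw [hF, integral_add (integrable_const _) (integrable_finset_sum _ (fun j _ =>
        (integrable_const _).indicator (hcapMeas j))), integral_const,
        integral_finset_sum _ (fun j _ => (integrable_const _).indicator (hcapMeas j))]
      congr 1
      · rw [smul_eq_mul, mul_comm]; rfl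
      · apply Finset.sum_congr rfl
        intro j _
        rw [integral_indicator_const _ (hcapMeas j), smul_eq_mul, mul_comm]; rfl
    have hcapj : ∀ j : ℕ, (σ (capS j)).toReal ≤ C₁ * (((j:ℝ)+1)/a) ^ β := by
      intro j
      exact hcap e he (((j:ℝ)+1)/a) (by positivity)
    have hapow : (0:ℝ) < a ^ β := Real.rpow_pos_of_pos ha1 _
    have hsum2 : ∑ j ∈ Finset.range J, Real.exp (a - (j:ℝ)) * (σ (capS j)).toReal ≤
        C₁ * (Real.exp a / a^β) * D := by
      have hstep : ∀ j ∈ Finset.range J, Real.exp (a - (j:ℝ)) * (σ (capS j)).toReal ≤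
          (C₁ * (Real.exp a / a^β)) * (((j:ℝ)+1) ^ β * Real.exp (-(j:ℝ))) := by
        intro j _
        have h1 : Real.exp (a - (j:ℝ)) * (σ (capS j)).toReal ≤
            Real.exp (a - (j:ℝ)) * (C₁ * (((j:ℝ)+1)/a) ^ β) :=
          mul_le_mul_of_nonneg_left (hcapj j) (Real.exp_pos _).le
        have h2 : (((j:ℝ)+1)/a) ^ β = ((j:ℝ)+1) ^ β / a ^ β :=
          Real.div_rpow (by positivity) ha0 β
        have h3 : Real.exp (a - (j:ℝ)) = Real.exp a * Real.exp (-(j:ℝ)) := by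
          rw [← Real.exp_add]; ring_nf
        calc Real.exp (a - (j:ℝ)) * (σ (capS j)).toReal
            ≤ Real.exp (a - (j:ℝ)) * (C₁ * (((j:ℝ)+1)/a) ^ β) := h1
        _ = (C₁ * (Real.exp a / a^β)) * (((j:ℝ)+1) ^ β * Real.exp (-(j:ℝ))) := by
            rw [h2, h3]; field_simp
      calc ∑ j ∈ Finset.range J, Real.exp (a - (j:ℝ)) * (σ (capS j)).toReal
          ≤ ∑ j ∈ Finset.range J, (C₁ * (Real.exp a / a^β)) * (((j:ℝ)+1) ^ β * Real.exp (-(j:ℝ))) :=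
            Finset.sum_le_sum hstep
      _ = (C₁ * (Real.exp a / a^β)) * ∑ j ∈ Finset.range J, ((j:ℝ)+1) ^ β * Real.exp (-(j:ℝ)) := by
            rw [Finset.mul_sum]
      _ ≤ (C₁ * (Real.exp a / a^β)) * D := by
            apply mul_le_mul_of_nonneg_left (hDsum J)
            positivity
      _ = C₁ * (Real.exp a / a^β) * D := rfl
    -- convert a^{-β} to (1+a)^{-β}
    have hp1a : (0:ℝ) < (1+a) ^ β := Real.rpow_pos_of_pos h1a _
    have h2a : (1+a) ^ β ≤ 2^β * a^β := by
      rw [← Real.mul_rpow (by norm_num) ha0]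
      exact Real.rpow_le_rpow (by linarith) (by linarith) hβ0
    have hkey : Real.exp a / a^β ≤ 2^β * (Real.exp a * (1+a)^(-β)) := by
      rw [Real.rpow_neg h1a.le, div_eq_mul_inv]
      rw [show (2:ℝ)^β * (Real.exp a * ((1+a)^β)⁻¹) = Real.exp a * (2^β * ((1+a)^β)⁻¹) by ring]
      apply mul_le_mul_of_nonneg_left _ (Real.exp_pos _).le
      rw [show (2:ℝ)^β * ((1+a)^β)⁻¹ = 2^β / (1+a)^β by ring, inv_eq_one_div,
        div_le_div_iff₀ hapow hp1a]
      linarith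
    have hfirst : Real.exp (-a) * A ≤ (A * C₀) * (Real.exp a * (1+a)^(-β)) := by
      have h1 : (1+a) ^ β ≤ C₀ * Real.exp (1*a) := hC₀le a ha0
      rw [one_mul] at h1
      have h2 : Real.exp (-a) ≤ 1 := Real.exp_le_one_iff.2 (by linarith)
      have h3 : Real.exp (-a) * (1+a)^β ≤ C₀ * Real.exp a := by
        calc Real.exp (-a) * (1+a)^β ≤ 1 * (1+a)^β :=
              mul_le_mul_of_nonneg_right h2 hp1a.le
        _ = (1+a)^β := one_mul _
        _ ≤ C₀ * Real.exp a := h1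
      calc Real.exp (-a) * A = A * (Real.exp (-a) * (1+a)^β) * (1+a)^(-β) := by
            rw [show A * (Real.exp (-a) * (1+a)^β) * (1+a)^(-β)
              = Real.exp (-a) * A * ((1+a)^β * (1+a)^(-β)) by ring, hinv, mul_one]
      _ ≤ A * (C₀ * Real.exp a) * (1+a)^(-β) := by
            apply mul_le_mul_of_nonneg_right _ (Real.rpow_pos_of_pos h1a _).le
            exact mul_le_mul_of_nonneg_left h3 hA0
      _ = (A * C₀) * (Real.exp a * (1+a)^(-β)) := by ring
    calc sphInt N x ≤ ∫ ω, F ω ∂σ := hIineq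
    _ = Real.exp (-a) * A + ∑ j ∈ Finset.range J, Real.exp (a - (j:ℝ)) * (σ (capS j)).toReal := hFval
    _ ≤ (A * C₀) * (Real.exp a * (1+a)^(-β)) + C₁ * (Real.exp a / a^β) * D := by
        have := hsum2; linarith [hfirst]
    _ ≤ (A * C₀) * (Real.exp a * (1+a)^(-β)) + (C₁*D*2^β) * (Real.exp a * (1+a)^(-β)) := by
        have h1 : C₁ * (Real.exp a / a^β) * D ≤ (C₁*D*2^β) * (Real.exp a * (1+a)^(-β)) := by
          calc C₁ * (Real.exp a / a^β) * D ≤ C₁ * (2^β * (Real.exp a * (1+a)^(-β))) * D :=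
                mul_le_mul_of_nonneg_right (mul_le_mul_of_nonneg_left hkey hC₁.le) hD.le
          _ = (C₁*D*2^β) * (Real.exp a * (1+a)^(-β)) := by ring
        linarith
    _ ≤ (A*C₀ + A*2^β + C₁*D*2^β + 1) * (Real.exp a * (1+a)^(-β)) := by
        nlinarith [mul_nonneg hA0 h2β.le, hEpos]

end AuxPsiEstimate

set_option maxHeartbeats 1000000 in
/-- Estimate of `∫_{|x| ≤ φ_k(t)+R} ψ(x,t)^r dx` for `N ≥ 2`. -/
theorem psi_integral_estimate (N : ℕ) (hN : 2 ≤ N) (μ k R r : ℝ)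
    (hμ : 0 ≤ μ) (hk0 : 0 ≤ k) (hk1 : k < 1) (hR : 0 < R) (hr : 1 < r) :
    ∃ C > (0:ℝ), ∀ t : ℝ, 1 ≤ t →
      (∫ x in {x : EuclideanSpace ℝ (Fin N) | ‖x‖ ≤ phik k t + R}, psiF N μ k x t ^ r) ≤
        C * rho μ k t ^ r * Real.exp (r * phik k t) *
          (1 + phik k t) ^ ((2 - r) * ((N : ℝ) - 1) / 2) := by
  set E := EuclideanSpace ℝ (Fin N)
  have hN1 : (2:ℝ) ≤ (N:ℝ) := by exact_mod_cast hN
  set β : ℝ := ((N:ℝ)-1)/2 with hβ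
  set γ : ℝ := (2 - r) * ((N:ℝ)-1) / 2 with hγ
  have hβ0 : 0 ≤ β := by rw [hβ]; linarith
  have hr0 : (0:ℝ) < r := by linarith
  obtain ⟨Cs, hCs, hsph⟩ := sphInt_bound N hN
  obtain ⟨Cr, hCr, hrad⟩ := radial_bound' (r' := r) (γ := γ) hr0
  haveI : Nontrivial E := by
    refine nontrivial_of_ne (EuclideanSpace.single ⟨0, by omega⟩ (1:ℝ)) 0 (fun h => ?_)
    apply (one_ne_zero : (1:ℝ) ≠ 0)
    calc (1:ℝ) = ‖EuclideanSpace.single (⟨0, by omega⟩ : Fin N) (1:ℝ)‖ := by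
          rw [EuclideanSpace.norm_single]; norm_num
    _ = ‖(0 : EuclideanSpace ℝ (Fin N))‖ := by rw [h]
    _ = 0 := norm_zero
  have hdim : Module.finrank ℝ E = N := finrank_euclideanSpace_fin
  set volball := ((volume : Measure E) (Metric.ball 0 1)).toReal with hvolball
  have hvolball0 : 0 < volball := by
    rw [hvolball]
    refine ENNReal.toReal_pos (ne_of_gt (Metric.measure_ball_pos _ _ one_pos)) measure_ball_lt_top.ne
  set cN : ℝ := (N:ℝ) * volball with hcN
  have hcN0 : 0 < cN := by positivity
  set Kγ : ℝ := max 1 ((1+R) ^ γ) with hKγ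
  have hKγ1 : (1:ℝ) ≤ Kγ := le_max_left _ _
  set C : ℝ := Cs ^ r * cN * Cr * Real.exp (r*R) * Kγ with hC
  have hCpos : 0 < C := by
    have h1 : (0:ℝ) < Cs ^ r := Real.rpow_pos_of_pos hCs _
    have h2 : (0:ℝ) < Real.exp (r*R) := Real.exp_pos _
    positivity
  refine ⟨C, hCpos, fun t ht => ?_⟩
  set φ : ℝ := phik k t with hφ
  have h1k : (0:ℝ) < 1 - k := by linarith
  have hφ1 : (1:ℝ) ≤ φ := by
    rw [hφ, phik]
    have h1 : (1:ℝ) ≤ t ^ (1-k) := Real.one_le_rpow ht h1k.le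
    rw [le_div_iff₀ h1k]
    nlinarith
  set M : ℝ := φ + R with hM
  have hM1 : (1:ℝ) ≤ M := by rw [hM]; linarith
  have hM0 : (0:ℝ) < M := by linarith
  -- nonnegativity
  have hρ : 0 ≤ rho μ k t := by
    rw [rho]
    apply mul_nonneg (Real.rpow_nonneg (by linarith) _)
    rw [besselK]
    exact setIntegral_nonneg measurableSet_Ioi fun ζ _ =>
      mul_nonneg (Real.exp_pos _).le (Real.cosh_pos _).le
  have hsphnn : ∀ x : E, 0 ≤ sphInt N x := fun x =>
    integral_nonneg fun ω => (Real.exp_pos _).le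
  have hSball : {x : E | ‖x‖ ≤ phik k t + R} = Metric.closedBall 0 M := by
    ext x
    simp [Metric.mem_closedBall, dist_zero_right, hM, hφ]
  set p : ℝ := -(r*β) with hp
  set h : E → ℝ := fun x => Real.exp (r*‖x‖) * (1+‖x‖) ^ p with hh
  have hhcont : Continuous h := by
    rw [hh]
    apply Continuous.mul
    · exact Real.continuous_exp.comp (continuous_const.mul continuous_norm)
    · rw [continuous_iff_continuousAt]
      intro x
      exact ContinuousAt.rpow_const ((continuous_const.add continuous_norm).continuousAt)
        (Or.inl (by positivity))
  have hhnn : ∀ x : E, 0 ≤ h x := by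
    intro x
    have h1 : (0:ℝ) < 1 + ‖x‖ := by positivity
    have := Real.rpow_pos_of_pos h1 p
    rw [hh]
    positivity
  have hhint : IntegrableOn h (Metric.closedBall (0:E) M) :=
    hhcont.continuousOn.integrableOn_compact (isCompact_closedBall 0 M)
  -- Step B pointwise
  have hptB : ∀ x : E, sphInt N x ^ r ≤ Cs ^ r * h x := by
    intro x
    have h1 : sphInt N x ≤ Cs * (Real.exp ‖x‖ * (1+‖x‖) ^ (-β)) := hsph x
    have h2 : sphInt N x ^ r ≤ (Cs * (Real.exp ‖x‖ * (1+‖x‖) ^ (-β))) ^ r :=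
      Real.rpow_le_rpow (hsphnn x) h1 hr0.le
    refine h2.trans (le_of_eq ?_)
    have h3 : (0:ℝ) < 1 + ‖x‖ := by positivity
    rw [Real.mul_rpow hCs.le (by positivity), Real.mul_rpow (Real.exp_pos _).le
      (Real.rpow_pos_of_pos h3 _).le, ← Real.exp_mul, ← Real.rpow_mul h3.le, hh]
    have : -β * r = p := by rw [hp]; ring
    rw [this, mul_comm ‖x‖ r]
  -- Step B integral
  have hB : (∫ x in Metric.closedBall (0:E) M, sphInt N x ^ r) ≤
      Cs ^ r * ∫ x in Metric.closedBall (0:E) M, h x := by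
    rw [← integral_const_mul]
    refine integral_mono_of_nonneg (Filter.Eventually.of_forall fun x =>
      Real.rpow_nonneg (hsphnn x) r) ((hhint.const_mul _)) (Filter.Eventually.of_forall hptB)
  -- Step D/E/F : radial reduction
  set G : ℝ → ℝ := fun y => Real.exp (r*y) * (1+y) ^ p with hG
  set f0 : ℝ → ℝ := Set.indicator (Iic M) G with hf0
  have hindic : ∀ x : E, Set.indicator (Metric.closedBall 0 M) h x = f0 ‖x‖ := by
    intro x
    by_cases hx : ‖x‖ ≤ M
    · rw [Set.indicator_of_mem (by simpa [Metric.mem_closedBall, dist_zero_right] using hx),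
        hf0, Set.indicator_of_mem (by simpa [mem_Iic] using hx)]
    · rw [Set.indicator_of_notMem (by simpa [Metric.mem_closedBall, dist_zero_right] using hx),
        hf0, Set.indicator_of_notMem (by simpa [mem_Iic] using hx)]
  have hD : (∫ x in Metric.closedBall (0:E) M, h x) = ∫ x : E, f0 ‖x‖ := by
    rw [← integral_indicator (measurableSet_closedBall)]
    exact integral_congr_ae (Filter.Eventually.of_forall hindic)
  have hE : (∫ x : E, f0 ‖x‖) =
      (N:ℝ) * (volball * ∫ y in Ioi (0:ℝ), y ^ (N-1) • f0 y) := by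
    rw [integral_fun_norm_addHaar (volume : Measure E) f0, hdim, nsmul_eq_mul, smul_eq_mul,
      hvolball]
    rfl
  have hF : (∫ y in Ioi (0:ℝ), y ^ (N-1) • f0 y) =
      ∫ y in Ioc (0:ℝ) M, y ^ (N-1) * G y := by
    have h1 : ∀ y : ℝ, y ^ (N-1) • f0 y =
        Set.indicator (Iic M) (fun y => y ^ (N-1) * G y) y := by
      intro y
      by_cases hy : y ∈ Iic M
      · rw [hf0, Set.indicator_of_mem hy, Set.indicator_of_mem hy, smul_eq_mul]
      · rw [hf0, Set.indicator_of_notMem hy, Set.indicator_of_notMem hy, smul_zero]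
    rw [setIntegral_congr_fun measurableSet_Ioi (fun y _ => h1 y),
      setIntegral_indicator measurableSet_Iic, Set.Ioi_inter_Iic]
  have hG2 : (∫ y in Ioc (0:ℝ) M, y ^ (N-1) * G y) ≤
      ∫ y in Ioc (0:ℝ) M, Real.exp (r*y) * (1+y) ^ γ := by
    have hint1 : IntegrableOn (fun y => y ^ (N-1) * G y) (Ioc 0 M) := by
      have hcont : ContinuousOn (fun y => y ^ (N-1) * G y) (Icc 0 M) := by
        intro y hy
        have h1 : (0:ℝ) < 1 + y := by have := hy.1; linarith
        refine ContinuousWithinAt.mul (continuous_pow _).continuousWithinAt ?_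
        refine ContinuousWithinAt.mul
          ((Real.continuous_exp.comp (continuous_const.mul continuous_id)).continuousWithinAt) ?_
        exact (ContinuousAt.rpow_const ((continuous_const.add continuous_id).continuousAt)
          (Or.inl h1.ne')).continuousWithinAt
      exact (hcont.integrableOn_compact isCompact_Icc).mono_set Ioc_subset_Icc_self
    have hint2 : IntegrableOn (fun y => Real.exp (r*y) * (1+y) ^ γ) (Ioc 0 M) := by
      have hcont : ContinuousOn (fun y => Real.exp (r*y) * (1+y) ^ γ) (Icc 0 M) := by
        intro y hy
        have h1 : (0:ℝ) < 1 + y := by have := hy.1; linarith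
        refine ContinuousWithinAt.mul
          ((Real.continuous_exp.comp (continuous_const.mul continuous_id)).continuousWithinAt) ?_
        exact (ContinuousAt.rpow_const ((continuous_const.add continuous_id).continuousAt)
          (Or.inl h1.ne')).continuousWithinAt
      exact (hcont.integrableOn_compact isCompact_Icc).mono_set Ioc_subset_Icc_self
    refine setIntegral_mono_on hint1 hint2 measurableSet_Ioc (fun y hy => ?_)
    have hy0 : 0 < y := hy.1
    have h1y : (0:ℝ) < 1 + y := by linarith
    have h1 : y ^ (N-1) ≤ (1+y) ^ (N-1) := pow_le_pow_left₀ hy0.le (by linarith) _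
    have h2 : ((1+y):ℝ) ^ (N-1) = (1+y) ^ (((N:ℝ))-1) := by
      rw [← Real.rpow_natCast (1+y) (N-1), Nat.cast_sub (by omega : 1 ≤ N), Nat.cast_one]
    have h3 : (1+y) ^ (((N:ℝ))-1) * (1+y) ^ p = (1+y) ^ γ := by
      rw [← Real.rpow_add h1y]
      congr 1
      rw [hp, hβ, hγ]
      ring
    calc y ^ (N-1) * G y ≤ (1+y) ^ (N-1) * G y := by
          apply mul_le_mul_of_nonneg_right h1
          rw [hG]
          have := Real.rpow_pos_of_pos h1y p
          positivity
    _ = Real.exp (r*y) * (1+y) ^ γ := by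
          rw [hG, h2, ← h3]; ring
  have hH : (∫ y in Ioc (0:ℝ) M, Real.exp (r*y) * (1+y) ^ γ) ≤
      Cr * (Real.exp (r*M) * (1+M) ^ γ) := hrad M hM1
  -- combine radial chain
  have hradnn : (0:ℝ) ≤ Real.exp (r*M) * (1+M) ^ γ := by
    have := Real.rpow_pos_of_pos (show (0:ℝ) < 1 + M by linarith) γ
    positivity
  have hchain : (∫ x in Metric.closedBall (0:E) M, sphInt N x ^ r) ≤
      Cs ^ r * (cN * (Cr * (Real.exp (r*M) * (1+M) ^ γ))) := by
    have h1 : (∫ y in Ioi (0:ℝ), y ^ (N-1) • f0 y) ≤ Cr * (Real.exp (r*M) * (1+M) ^ γ) := by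
      rw [hF]; exact hG2.trans hH
    have h2 : (∫ x : E, f0 ‖x‖) ≤ cN * (Cr * (Real.exp (r*M) * (1+M) ^ γ)) := by
      rw [hE, hcN, mul_assoc]
      apply mul_le_mul_of_nonneg_left _ (by positivity : (0:ℝ) ≤ (N:ℝ))
      exact mul_le_mul_of_nonneg_left h1 hvolball0.le
    calc (∫ x in Metric.closedBall (0:E) M, sphInt N x ^ r) ≤
        Cs ^ r * ∫ x in Metric.closedBall (0:E) M, h x := hB
    _ = Cs ^ r * ∫ x : E, f0 ‖x‖ := by rw [hD]
    _ ≤ Cs ^ r * (cN * (Cr * (Real.exp (r*M) * (1+M) ^ γ))) := by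
        apply mul_le_mul_of_nonneg_left h2 (Real.rpow_pos_of_pos hCs r).le
  -- exponential and power conversion
  have hexp : Real.exp (r*M) = Real.exp (r*φ) * Real.exp (r*R) := by
    rw [← Real.exp_add]
    congr 1
    rw [hM]; ring
  have hφ0 : (0:ℝ) ≤ φ := by linarith
  have h1φ : (0:ℝ) < 1 + φ := by linarith
  have hpow : (1+M) ^ γ ≤ Kγ * (1+φ) ^ γ := by
    rcases le_or_gt 0 γ with hγ0 | hγ0
    · have h1 : (1:ℝ) + M ≤ (1+φ) * (1+R) := by rw [hM]; nlinarith
      have h2 : ((1:ℝ)+M) ^ γ ≤ ((1+φ) * (1+R)) ^ γ :=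
        Real.rpow_le_rpow (by linarith) h1 hγ0
      have h3 : ((1+φ) * (1+R)) ^ γ = (1+φ) ^ γ * (1+R) ^ γ :=
        Real.mul_rpow h1φ.le (by linarith)
      have h4 : (1+R) ^ γ ≤ Kγ := le_max_right _ _
      calc ((1:ℝ)+M) ^ γ ≤ (1+φ) ^ γ * (1+R) ^ γ := h2.trans_eq h3
      _ ≤ (1+φ) ^ γ * Kγ := mul_le_mul_of_nonneg_left h4 (Real.rpow_pos_of_pos h1φ _).le
      _ = Kγ * (1+φ) ^ γ := by ring
    · have h1 : ((1:ℝ)+M) ^ γ ≤ (1+φ) ^ γ :=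
        Real.rpow_le_rpow_of_nonpos h1φ (by rw [hM]; linarith) hγ0.le
      calc ((1:ℝ)+M) ^ γ ≤ (1+φ) ^ γ := h1
      _ = 1 * (1+φ) ^ γ := (one_mul _).symm
      _ ≤ Kγ * (1+φ) ^ γ := mul_le_mul_of_nonneg_right hKγ1 (Real.rpow_pos_of_pos h1φ _).le
  -- final assembly
  have hAint : (∫ x in {x : E | ‖x‖ ≤ phik k t + R}, psiF N μ k x t ^ r) =
      (∫ x in Metric.closedBall (0:E) M, sphInt N x ^ r) * rho μ k t ^ r := by
    rw [hSball]
    have hcongr : (∫ x in Metric.closedBall (0:E) M, psiF N μ k x t ^ r) =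
        ∫ x in Metric.closedBall (0:E) M, sphInt N x ^ r * rho μ k t ^ r :=
      setIntegral_congr_fun measurableSet_closedBall
        (fun x _ => Real.mul_rpow (hsphnn x) hρ)
    rw [hcongr]
    exact integral_mul_const _ _
  rw [hAint]
  have hρr : 0 ≤ rho μ k t ^ r := Real.rpow_nonneg hρ r
  have hfinal : (∫ x in Metric.closedBall (0:E) M, sphInt N x ^ r) ≤
      C * Real.exp (r*φ) * (1+φ) ^ γ := by
    refine hchain.trans ?_
    rw [hexp]
    have h1 : Cs ^ r * (cN * (Cr * (Real.exp (r*φ) * Real.exp (r*R) * ((1+M) ^ γ)))) ≤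
        Cs ^ r * (cN * (Cr * (Real.exp (r*φ) * Real.exp (r*R) * (Kγ * (1+φ) ^ γ)))) := by
      have h2 : (0:ℝ) ≤ Cs ^ r := (Real.rpow_pos_of_pos hCs r).le
      have h3 : (0:ℝ) ≤ Real.exp (r*φ) * Real.exp (r*R) :=
        mul_nonneg (Real.exp_pos _).le (Real.exp_pos _).le
      apply mul_le_mul_of_nonneg_left _ h2
      apply mul_le_mul_of_nonneg_left _ hcN0.le
      apply mul_le_mul_of_nonneg_left _ hCr.le
      exact mul_le_mul_of_nonneg_left hpow h3
    exact h1.trans (le_of_eq (by rw [hC]; ring))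
  calc (∫ x in Metric.closedBall (0:E) M, sphInt N x ^ r) * rho μ k t ^ r ≤
      (C * Real.exp (r*φ) * (1+φ) ^ γ) * rho μ k t ^ r :=
        mul_le_mul_of_nonneg_right hfinal hρr
  _ = C * rho μ k t ^ r * Real.exp (r*φ) * (1+φ) ^ γ := by ring
end

section
/- Let μ ≥ 0 and k ∈ [0,1). The function ρ is twice differentiable on [1,∞) and satisfies, for all t ≥ 1, ρ''(t) − t^{−2k} ρ(t) − d/dt(μ ρ(t)/t) = 0. -/
open MeasureTheory Real Set

section RhoOdeAux
open Filter

noncomputable def Kn (ν : ℝ) (n : ℕ) (x : ℝ) : ℝ :=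
  ∫ ζ in Set.Ioi (0:ℝ), Real.cosh ζ ^ n * Real.exp (-x * Real.cosh ζ) * Real.cosh (ν * ζ)

lemma besselK_eq_Kn (ν x : ℝ) : besselK ν x = Kn ν 0 x := by
  simp [besselK, Kn]

lemma sq_div_four_le_exp {ζ : ℝ} (hζ : 0 ≤ ζ) : ζ^2/4 ≤ Real.exp ζ := by
  have e1 := Real.add_one_le_exp (ζ/2)
  have e2 : Real.exp (ζ/2) * Real.exp (ζ/2) = Real.exp ζ := by
    rw [← Real.exp_add]; ring_nf
  have e3 : (ζ/2+1) * (ζ/2+1) ≤ Real.exp (ζ/2) * Real.exp (ζ/2) :=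
    mul_self_le_mul_self (by linarith) (by linarith)
  nlinarith

lemma exponent_bound {a : ℝ} (b : ℝ) (ha : 0 < a) {ζ : ℝ} (hζ : 0 ≤ ζ) :
    b*ζ - a*Real.exp ζ ≤ 2*b^2/a - a/8*ζ^2 := by
  have h2 := sq_div_four_le_exp hζ
  have h3 : b * ζ ≤ 2*b^2/a + a/8*ζ^2 := by
    rw [← mul_le_mul_iff_right₀ ha]
    have : a * (2*b^2/a + a/8*ζ^2) = 2*b^2 + a*(a/8*ζ^2) := by
      field_simp
    rw [this]
    nlinarith [sq_nonneg (a*ζ - 4*b)]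
  nlinarith

lemma integrable_dom (a b : ℝ) (ha : 0 < a) :
    IntegrableOn (fun ζ => Real.exp (b*ζ - a*Real.exp ζ)) (Set.Ioi 0) := by
  have hI : Integrable (fun ζ : ℝ => Real.exp (2*b^2/a) * Real.exp (-(a/8)*ζ^2)) volume :=
    (integrable_exp_neg_mul_sq (by positivity : (0:ℝ) < a/8)).const_mul _
  refine hI.integrableOn.mono' ?_ ?_
  · exact (Real.continuous_exp.comp (by continuity)).aestronglyMeasurable
  · filter_upwards [ae_restrict_mem measurableSet_Ioi] with ζ hζ
    rw [Real.norm_eq_abs, Real.abs_exp, ← Real.exp_add]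
    apply Real.exp_le_exp.2
    have := exponent_bound b ha (le_of_lt hζ)
    linarith

lemma Kn_integrand_bound (ν : ℝ) (n : ℕ) {c ζ : ℝ} (hc : 0 < c) (hζ : 0 ≤ ζ) :
    |Real.cosh ζ ^ n * Real.exp (-c * Real.cosh ζ) * Real.cosh (ν*ζ)|
      ≤ Real.exp (((n:ℝ) + |ν|) * ζ - c/2*Real.exp ζ) := by
  have hce : Real.cosh ζ ≤ Real.exp ζ := by
    rw [Real.cosh_eq]
    have := Real.exp_le_exp.2 (neg_le_self hζ)
    linarith
  have hec : Real.exp ζ / 2 ≤ Real.cosh ζ := by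
    rw [Real.cosh_eq]
    have := (Real.exp_pos (-ζ)).le
    linarith
  have hcν : Real.cosh (ν*ζ) ≤ Real.exp (|ν| * ζ) := by
    calc Real.cosh (ν*ζ) = Real.cosh (|ν*ζ|) := (Real.cosh_abs _).symm
    _ ≤ Real.exp (|ν*ζ|) := by
        rw [Real.cosh_eq]
        have := Real.exp_le_exp.2 (neg_le_self (abs_nonneg (ν*ζ)))
        linarith
    _ = Real.exp (|ν| * ζ) := by rw [abs_mul, abs_of_nonneg hζ]
  have h1 : Real.cosh ζ ^ n ≤ Real.exp ((n:ℝ)*ζ) := by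
    rw [Real.exp_nat_mul]
    exact pow_le_pow_left₀ (Real.cosh_pos ζ).le hce n
  have h2 : Real.exp (-c * Real.cosh ζ) ≤ Real.exp (-(c/2*Real.exp ζ)) := by
    apply Real.exp_le_exp.2
    nlinarith
  rw [abs_of_nonneg (by positivity)]
  calc Real.cosh ζ ^ n * Real.exp (-c * Real.cosh ζ) * Real.cosh (ν*ζ)
      ≤ Real.exp ((n:ℝ)*ζ) * Real.exp (-(c/2*Real.exp ζ)) * Real.exp (|ν| * ζ) := by
        apply mul_le_mul (mul_le_mul h1 h2 (Real.exp_pos _).le (Real.exp_pos _).le) hcν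
          (Real.cosh_pos _).le (by positivity)
    _ = Real.exp (((n:ℝ) + |ν|) * ζ - c/2*Real.exp ζ) := by
        rw [← Real.exp_add, ← Real.exp_add]; ring_nf


lemma cont_integrand (ν x : ℝ) (n : ℕ) :
    Continuous (fun ζ => Real.cosh ζ ^ n * Real.exp (-x*Real.cosh ζ) * Real.cosh (ν*ζ)) := by
  continuity

lemma integrableOn_Kn (ν : ℝ) (n : ℕ) {x : ℝ} (hx : 0 < x) :
    IntegrableOn (fun ζ => Real.cosh ζ ^ n * Real.exp (-x*Real.cosh ζ) * Real.cosh (ν*ζ))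
      (Set.Ioi 0) := by
  refine (integrable_dom (x/2) ((n:ℝ) + |ν|) (by positivity)).mono'
    (cont_integrand ν x n).aestronglyMeasurable ?_
  filter_upwards [ae_restrict_mem measurableSet_Ioi] with ζ hζ
  rw [Real.norm_eq_abs]
  have := Kn_integrand_bound ν n hx (le_of_lt hζ)
  convert this using 3 <;> ring

lemma hasDerivAt_Kn (ν : ℝ) (n : ℕ) {x : ℝ} (hx : 0 < x) :
    HasDerivAt (Kn ν n) (-Kn ν (n+1) x) x := by
  have key := hasDerivAt_integral_of_dominated_loc_of_deriv_le
    (F := fun t ζ => Real.cosh ζ ^ n * Real.exp (-t*Real.cosh ζ) * Real.cosh (ν*ζ))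
    (F' := fun t ζ => -(Real.cosh ζ ^ (n+1) * Real.exp (-t*Real.cosh ζ) * Real.cosh (ν*ζ)))
    (x₀ := x) (s := Metric.ball x (x/2))
    (bound := fun ζ => Real.exp ((((n:ℕ)+1:ℝ) + |ν|) * ζ - x/4*Real.exp ζ))
    (μ := volume.restrict (Set.Ioi 0))
    (Metric.ball_mem_nhds x (by positivity))
    (Eventually.of_forall fun t => (cont_integrand ν t n).aestronglyMeasurable)
    (integrableOn_Kn ν n hx)
    ((cont_integrand ν x (n+1)).neg.aestronglyMeasurable)
    ?_ ?_ ?_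
  · have : (∫ ζ in Set.Ioi (0:ℝ),
        -(Real.cosh ζ ^ (n+1) * Real.exp (-x*Real.cosh ζ) * Real.cosh (ν*ζ)))
        = -Kn ν (n+1) x := by
      rw [integral_neg]; rfl
    rw [this] at key
    exact key.2
  · -- bound
    filter_upwards [ae_restrict_mem measurableSet_Ioi] with ζ hζ
    intro t ht
    rw [Metric.mem_ball, Real.dist_eq, abs_lt] at ht
    have htpos : x/2 < t := by linarith [ht.1]
    rw [norm_neg, Real.norm_eq_abs]
    calc |Real.cosh ζ ^ (n+1) * Real.exp (-t*Real.cosh ζ) * Real.cosh (ν*ζ)|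
        ≤ |Real.cosh ζ ^ (n+1) * Real.exp (-(x/2)*Real.cosh ζ) * Real.cosh (ν*ζ)| := by
          rw [abs_of_nonneg (by positivity), abs_of_nonneg (by positivity)]
          have : Real.exp (-t*Real.cosh ζ) ≤ Real.exp (-(x/2)*Real.cosh ζ) := by
            apply Real.exp_le_exp.2
            nlinarith [Real.cosh_pos ζ]
          have h1 : (0:ℝ) ≤ Real.cosh ζ ^ (n+1) := by positivity
          have h2 : (0:ℝ) < Real.cosh (ν*ζ) := Real.cosh_pos _
          exact mul_le_mul_of_nonneg_right
            (mul_le_mul_of_nonneg_left this h1) h2.le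
      _ ≤ Real.exp ((((n:ℕ)+1:ℝ) + |ν|) * ζ - x/4*Real.exp ζ) := by
          have := Kn_integrand_bound ν (n+1) (by positivity : (0:ℝ) < x/2) (le_of_lt hζ)
          convert this using 3
          · push_cast; ring
          · ring
  · -- bound integrable
    have := integrable_dom (x/4) (((n:ℕ)+1:ℝ) + |ν|) (by positivity)
    apply this.congr_fun ?_ measurableSet_Ioi
    intro ζ _; ring_nf
  · -- differentiability
    filter_upwards [] with ζ
    intro t ht
    have h1 : HasDerivAt (fun t : ℝ => -t * Real.cosh ζ) (-Real.cosh ζ) t := by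
      simpa using ((hasDerivAt_id t).neg.mul_const (Real.cosh ζ))
    have h2 := (h1.exp.const_mul (Real.cosh ζ ^ n)).mul_const (Real.cosh (ν*ζ))
    refine h2.congr_deriv ?_
    rw [pow_succ]; ring

lemma abs_sinh_le_cosh (y : ℝ) : |Real.sinh y| ≤ Real.cosh y := by
  have h := Real.cosh_sq_sub_sinh_sq y
  have := Real.cosh_pos y
  rw [abs_le]
  constructor <;> nlinarith

lemma bessel_ode (ν : ℝ) {x : ℝ} (hx : 0 < x) :
    x^2 * Kn ν 2 x = x * Kn ν 1 x + (x^2 + ν^2) * Kn ν 0 x := by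
  set f0 : ℝ → ℝ := fun ζ => Real.cosh ζ ^ 0 * Real.exp (-x*Real.cosh ζ) * Real.cosh (ν*ζ) with hf0
  set f1 : ℝ → ℝ := fun ζ => Real.cosh ζ ^ 1 * Real.exp (-x*Real.cosh ζ) * Real.cosh (ν*ζ) with hf1
  set f2 : ℝ → ℝ := fun ζ => Real.cosh ζ ^ 2 * Real.exp (-x*Real.cosh ζ) * Real.cosh (ν*ζ) with hf2
  set G : ℝ → ℝ := fun ζ =>
    Real.exp (-x*Real.cosh ζ) * (-(x * Real.sinh ζ * Real.cosh (ν*ζ)) - ν * Real.sinh (ν*ζ))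
    with hGdef
  set H : ℝ → ℝ := fun ζ =>
    x^2 * f2 ζ - x * f1 ζ - (x^2 + ν^2) * f0 ζ with hHdef
  have hG : ∀ ζ : ℝ, HasDerivAt G (H ζ) ζ := by
    intro ζ
    have he : HasDerivAt (fun ζ : ℝ => Real.exp (-x*Real.cosh ζ))
        (Real.exp (-x*Real.cosh ζ) * (Real.sinh ζ * (-x))) ζ :=
      ((Real.hasDerivAt_cosh ζ).const_mul (-x)).exp.congr_deriv (by ring)
    have hcν : HasDerivAt (fun ζ : ℝ => Real.cosh (ν*ζ)) (Real.sinh (ν*ζ) * ν) ζ := by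
      simpa using ((hasDerivAt_id ζ).const_mul ν).cosh
    have hsν : HasDerivAt (fun ζ : ℝ => Real.sinh (ν*ζ)) (Real.cosh (ν*ζ) * ν) ζ := by
      simpa using ((hasDerivAt_id ζ).const_mul ν).sinh
    have hinner : HasDerivAt
        (fun ζ : ℝ => -(x * Real.sinh ζ * Real.cosh (ν*ζ)) - ν * Real.sinh (ν*ζ))
        (-(x * Real.cosh ζ * Real.cosh (ν*ζ) + x * Real.sinh ζ * (Real.sinh (ν*ζ) * ν))
          - ν * (Real.cosh (ν*ζ) * ν)) ζ := by
      have h1 := (((Real.hasDerivAt_sinh ζ).const_mul x).mul hcν)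
      exact (h1.neg.sub (hsν.const_mul ν)).congr_deriv (by ring)
    have := he.mul hinner
    refine this.congr_deriv ?_
    symm
    simp only [hHdef, hf0, hf1, hf2]
    have hs2 := Real.sinh_sq ζ
    linear_combination (-(x^2) * Real.exp (-x*Real.cosh ζ) * Real.cosh (ν*ζ)) * hs2
  have h0 : IntegrableOn f0 (Set.Ioi 0) := by rw [hf0]; exact integrableOn_Kn ν 0 hx
  have h1 : IntegrableOn f1 (Set.Ioi 0) := by rw [hf1]; exact integrableOn_Kn ν 1 hx
  have h2 : IntegrableOn f2 (Set.Ioi 0) := by rw [hf2]; exact integrableOn_Kn ν 2 hx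
  have hHint : IntegrableOn H (Set.Ioi 0) :=
    ((h2.const_mul (x^2)).sub (h1.const_mul x)).sub (h0.const_mul (x^2+ν^2))
  have hbound : ∀ ζ : ℝ, 0 ≤ ζ →
      ‖G ζ‖ ≤ (x + |ν|) * Real.exp ((1+|ν|) * ζ - x/2*Real.exp ζ) := by
    intro ζ hζ
    have hce : Real.cosh ζ ≤ Real.exp ζ := by
      rw [Real.cosh_eq]
      have := Real.exp_le_exp.2 (neg_le_self hζ)
      linarith
    have hec : Real.exp ζ / 2 ≤ Real.cosh ζ := by
      rw [Real.cosh_eq]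
      have := (Real.exp_pos (-ζ)).le
      linarith
    have hcν : Real.cosh (ν*ζ) ≤ Real.exp (|ν| * ζ) := by
      calc Real.cosh (ν*ζ) = Real.cosh (|ν*ζ|) := (Real.cosh_abs _).symm
      _ ≤ Real.exp (|ν*ζ|) := by
          rw [Real.cosh_eq]
          have := Real.exp_le_exp.2 (neg_le_self (abs_nonneg (ν*ζ)))
          linarith
      _ = Real.exp (|ν| * ζ) := by rw [abs_mul, abs_of_nonneg hζ]
    have he1 : (1:ℝ) ≤ Real.exp ζ := Real.one_le_exp hζ
    have hs1 := abs_sinh_le_cosh ζ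
    have hs2 := abs_sinh_le_cosh (ν*ζ)
    have hcp := (Real.cosh_pos (ν*ζ)).le
    have step1 : ‖G ζ‖ ≤ Real.exp (-x*Real.cosh ζ) * ((x * Real.exp ζ + |ν|) * Real.exp (|ν| * ζ)) := by
      rw [hGdef]
      simp only [Real.norm_eq_abs, abs_mul, Real.abs_exp]
      apply mul_le_mul_of_nonneg_left _ (Real.exp_pos _).le
      calc |(-(x * Real.sinh ζ * Real.cosh (ν*ζ)) - ν * Real.sinh (ν*ζ))|
          ≤ |x * Real.sinh ζ * Real.cosh (ν*ζ)| + |ν * Real.sinh (ν*ζ)| := by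
            rw [← abs_neg (x * Real.sinh ζ * Real.cosh (ν*ζ))] ; exact abs_sub _ _
        _ ≤ x * Real.cosh ζ * Real.cosh (ν*ζ) + |ν| * Real.cosh (ν*ζ) := by
            rw [abs_mul, abs_mul, abs_mul, abs_of_nonneg hx.le,
              abs_of_nonneg (Real.cosh_pos (ν*ζ)).le]
            gcongr
        _ ≤ x * Real.exp ζ * Real.exp (|ν| * ζ) + |ν| * Real.exp (|ν| * ζ) := by
            gcongr
        _ = (x * Real.exp ζ + |ν|) * Real.exp (|ν| * ζ) := by ring
    have step2 : Real.exp (-x*Real.cosh ζ) ≤ Real.exp (-(x/2*Real.exp ζ)) := by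
      apply Real.exp_le_exp.2; nlinarith
    have step3 : x * Real.exp ζ + |ν| ≤ (x + |ν|) * Real.exp ζ := by nlinarith [abs_nonneg ν]
    calc ‖G ζ‖ ≤ Real.exp (-x*Real.cosh ζ) * ((x * Real.exp ζ + |ν|) * Real.exp (|ν| * ζ)) := step1
      _ ≤ Real.exp (-(x/2*Real.exp ζ)) * (((x + |ν|) * Real.exp ζ) * Real.exp (|ν| * ζ)) := by
          apply mul_le_mul step2 (by gcongr) (by positivity) (Real.exp_pos _).le
      _ = (x + |ν|) * Real.exp ((1+|ν|) * ζ - x/2*Real.exp ζ) := by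
          rw [show (1+|ν|) * ζ = ζ + |ν| * ζ by ring, Real.exp_sub, Real.exp_add,
            Real.exp_neg]
          field_simp
  have hgbound : ∀ ζ : ℝ, 0 ≤ ζ →
      (x + |ν|) * Real.exp ((1+|ν|) * ζ - x/2*Real.exp ζ)
        ≤ (x + |ν|) * Real.exp (2*(1+|ν|)^2/(x/2)) * Real.exp (-(x/16)*ζ^2) := by
    intro ζ hζ
    have := exponent_bound (a := x/2) (1+|ν|) (by positivity) hζ
    rw [mul_assoc, ← Real.exp_add]
    apply mul_le_mul_of_nonneg_left _ (by positivity)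
    apply Real.exp_le_exp.2
    have hx16 : x/2/8 = x/16 := by ring
    linarith [this, hx16 ▸ this]
  have htend : Tendsto G atTop (nhds 0) := by
    have hev : ∀ᶠ ζ in atTop, ‖G ζ‖ ≤
        (x + |ν|) * Real.exp (2*(1+|ν|)^2/(x/2)) * Real.exp (-(x/16)*ζ^2) := by
      filter_upwards [eventually_ge_atTop (0:ℝ)] with ζ hζ
      exact (hbound ζ hζ).trans (hgbound ζ hζ)
    have h1 : Tendsto (fun ζ : ℝ => -(x/16)*ζ^2) atTop atBot :=
      Tendsto.const_mul_atTop_of_neg (neg_neg_of_pos (by positivity))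
        (tendsto_pow_atTop two_ne_zero)
    have h2 : Tendsto (fun ζ : ℝ => Real.exp (-(x/16)*ζ^2)) atTop (nhds 0) :=
      Real.tendsto_exp_atBot.comp h1
    have h3 := h2.const_mul ((x + |ν|) * Real.exp (2*(1+|ν|)^2/(x/2)))
    rw [mul_zero] at h3
    exact squeeze_zero_norm' hev (by simpa [mul_assoc] using h3)
  have hint := integral_Ioi_of_hasDerivAt_of_tendsto
    ((hG 0).continuousAt.continuousWithinAt) (fun ζ _ => hG ζ) hHint htend
  have hG0 : G 0 = 0 := by simp [hGdef]
  rw [hG0, sub_zero] at hint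
  have eA : (∫ ζ in Set.Ioi (0:ℝ), (x^2 * f2 ζ - x * f1 ζ))
      = (∫ ζ in Set.Ioi (0:ℝ), x^2 * f2 ζ) - ∫ ζ in Set.Ioi (0:ℝ), x * f1 ζ :=
    integral_sub (h2.const_mul _) (h1.const_mul _)
  have eB : (∫ ζ in Set.Ioi (0:ℝ), H ζ)
      = (∫ ζ in Set.Ioi (0:ℝ), (x^2 * f2 ζ - x * f1 ζ))
        - ∫ ζ in Set.Ioi (0:ℝ), (x^2+ν^2) * f0 ζ :=
    integral_sub ((h2.const_mul _).sub (h1.const_mul _)) (h0.const_mul _)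
  have eK0 : Kn ν 0 x = ∫ ζ in Set.Ioi (0:ℝ), f0 ζ := by rw [hf0]; rfl
  have eK1 : Kn ν 1 x = ∫ ζ in Set.Ioi (0:ℝ), f1 ζ := by rw [hf1]; rfl
  have eK2 : Kn ν 2 x = ∫ ζ in Set.Ioi (0:ℝ), f2 ζ := by rw [hf2]; rfl
  rw [eB, eA, integral_const_mul, integral_const_mul, integral_const_mul] at hint
  rw [eK0, eK1, eK2]
  linarith

lemma rho_eq (μ k t : ℝ) :
    rho μ k t = t ^ ((1 + μ) / 2) * Kn ((μ - 1) / (2 * (1 - k))) 0 (phik k t) := by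
  rw [rho, besselK_eq_Kn]

lemma phik_pos {k t : ℝ} (hk1 : k < 1) (ht : 0 < t) : 0 < phik k t :=
  div_pos (Real.rpow_pos_of_pos ht _) (by linarith)

lemma hasDerivAt_phik {k : ℝ} (hk1 : k < 1) {t : ℝ} (ht : 0 < t) :
    HasDerivAt (phik k) (t ^ (-k)) t := by
  have h := (Real.hasDerivAt_rpow_const (p := 1-k) (Or.inl ht.ne')).div_const (1-k)
  have hne : (1:ℝ) - k ≠ 0 := by linarith
  refine h.congr_deriv ?_
  rw [show (1:ℝ)-k-1 = -k by ring]
  rw [mul_comm, mul_div_assoc, div_self hne, mul_one]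

/-- first derivative of rho -/
noncomputable def rhoD (μ k t : ℝ) : ℝ :=
  (1+μ)/2 * t^((1+μ)/2 - 1) * Kn ((μ-1)/(2*(1-k))) 0 (phik k t)
    - t^((1+μ)/2 - k) * Kn ((μ-1)/(2*(1-k))) 1 (phik k t)

/-- second derivative of rho -/
noncomputable def rhoE (μ k t : ℝ) : ℝ :=
  (1+μ)/2 * ((1+μ)/2 - 1) * t^((1+μ)/2 - 2) * Kn ((μ-1)/(2*(1-k))) 0 (phik k t)
  - (1+μ)/2 * t^((1+μ)/2 - 1 - k) * Kn ((μ-1)/(2*(1-k))) 1 (phik k t)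
  - ((1+μ)/2 - k) * t^((1+μ)/2 - k - 1) * Kn ((μ-1)/(2*(1-k))) 1 (phik k t)
  + t^((1+μ)/2 - 2*k) * Kn ((μ-1)/(2*(1-k))) 2 (phik k t)

lemma hasDerivAt_rho (μ : ℝ) {k : ℝ} (hk1 : k < 1) {t : ℝ} (ht : 0 < t) :
    HasDerivAt (rho μ k) (rhoD μ k t) t := by
  set ν := (μ-1)/(2*(1-k))
  have hφ := phik_pos hk1 ht
  have h1 : HasDerivAt (fun t : ℝ => t^((1+μ)/2)) ((1+μ)/2 * t^((1+μ)/2 - 1)) t :=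
    Real.hasDerivAt_rpow_const (Or.inl ht.ne')
  have h2 : HasDerivAt (fun t : ℝ => Kn ν 0 (phik k t))
      (-Kn ν 1 (phik k t) * t^(-k)) t :=
    (hasDerivAt_Kn ν 0 hφ).comp t (hasDerivAt_phik hk1 ht)
  have h3 := h1.mul h2
  have heq : (fun t : ℝ => t^((1+μ)/2) * Kn ν 0 (phik k t)) = rho μ k := by
    funext s; rw [rho_eq]
  rw [← heq]
  refine h3.congr_deriv ?_
  rw [rhoD]
  rw [show t^((1+μ)/2 - k) = t^((1+μ)/2) * t^(-k) by
    rw [← Real.rpow_add ht]; ring_nf]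
  ring

lemma hasDerivAt_rhoD (μ : ℝ) {k : ℝ} (hk1 : k < 1) {t : ℝ} (ht : 0 < t) :
    HasDerivAt (rhoD μ k) (rhoE μ k t) t := by
  set ν := (μ-1)/(2*(1-k))
  have hφ := phik_pos hk1 ht
  have hp1 : HasDerivAt (fun t : ℝ => t^((1+μ)/2 - 1))
      (((1+μ)/2 - 1) * t^((1+μ)/2 - 1 - 1)) t :=
    Real.hasDerivAt_rpow_const (Or.inl ht.ne')
  have hp2 : HasDerivAt (fun t : ℝ => t^((1+μ)/2 - k))
      (((1+μ)/2 - k) * t^((1+μ)/2 - k - 1)) t :=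
    Real.hasDerivAt_rpow_const (Or.inl ht.ne')
  have hK0 : HasDerivAt (fun t : ℝ => Kn ν 0 (phik k t))
      (-Kn ν 1 (phik k t) * t^(-k)) t :=
    (hasDerivAt_Kn ν 0 hφ).comp t (hasDerivAt_phik hk1 ht)
  have hK1 : HasDerivAt (fun t : ℝ => Kn ν 1 (phik k t))
      (-Kn ν 2 (phik k t) * t^(-k)) t :=
    (hasDerivAt_Kn ν 1 hφ).comp t (hasDerivAt_phik hk1 ht)
  have hA := ((hp1.mul hK0).const_mul ((1+μ)/2)).sub (hp2.mul hK1)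
  have heq : (fun t : ℝ => (1+μ)/2 * (t^((1+μ)/2 - 1) * Kn ν 0 (phik k t))
      - t^((1+μ)/2 - k) * Kn ν 1 (phik k t)) = rhoD μ k := by
    funext s; rw [rhoD]; ring
  rw [← heq]
  refine hA.congr_deriv ?_
  rw [rhoE]
  rw [show t^((1+μ)/2 - 2) = t^((1+μ)/2 - 1 - 1) by ring_nf,
      show t^((1+μ)/2 - 1 - k) = t^((1+μ)/2 - 1) * t^(-k) by
        rw [← Real.rpow_add ht]; ring_nf,
      show t^((1+μ)/2 - 2*k) = t^((1+μ)/2 - k) * t^(-k) by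
        rw [← Real.rpow_add ht]; ring_nf]
  ring

end RhoOdeAux

/-- `ρ` is twice differentiable on `[1,∞)` and satisfies
`ρ''(t) − t^{−2k} ρ(t) − (μ ρ(t)/t)' = 0`. -/
theorem rho_ode (μ k : ℝ) (hμ : 0 ≤ μ) (hk0 : 0 ≤ k) (hk1 : k < 1) :
    (∀ t : ℝ, 1 ≤ t →
      DifferentiableAt ℝ (rho μ k) t ∧ DifferentiableAt ℝ (deriv (rho μ k)) t) ∧
    ∀ t : ℝ, 1 ≤ t →
      deriv (deriv (rho μ k)) t - t ^ (-(2 * k)) * rho μ k t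
        - deriv (fun s => μ * rho μ k s / s) t = 0 := by
  have hev : ∀ t : ℝ, 0 < t → deriv (rho μ k) =ᶠ[nhds t] rhoD μ k := by
    intro t ht0
    filter_upwards [isOpen_Ioi.mem_nhds (show t ∈ Ioi (0:ℝ) from ht0)] with s hs
    exact (hasDerivAt_rho μ hk1 hs).deriv
  constructor
  · intro t ht
    have ht0 : (0:ℝ) < t := lt_of_lt_of_le one_pos ht
    refine ⟨(hasDerivAt_rho μ hk1 ht0).differentiableAt, ?_⟩
    rw [(hev t ht0).differentiableAt_iff]
    exact (hasDerivAt_rhoD μ hk1 ht0).differentiableAt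
  · intro t ht
    have ht0 : (0:ℝ) < t := lt_of_lt_of_le one_pos ht
    have h2 : deriv (deriv (rho μ k)) t = rhoE μ k t := by
      rw [(hev t ht0).deriv_eq]
      exact (hasDerivAt_rhoD μ hk1 ht0).deriv
    have h3 : deriv (fun s => μ * rho μ k s / s) t
        = (μ * rhoD μ k t * t - μ * rho μ k t * 1) / t^2 :=
      (((hasDerivAt_rho μ hk1 ht0).const_mul μ).div (hasDerivAt_id t) ht0.ne').deriv
    rw [h2, h3, rhoE, rhoD, rho_eq]
    set ν := (μ-1)/(2*(1-k)) with hν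
    set A := Kn ν 0 (phik k t) with hA
    set B := Kn ν 1 (phik k t) with hB
    set C := Kn ν 2 (phik k t) with hCdef
    have hk1' : (1:ℝ) - k ≠ 0 := by linarith
    have hφ := phik_pos hk1 ht0
    have hbes := bessel_ode ν hφ
    rw [← hA, ← hB, ← hCdef] at hbes
    have hQ : (0:ℝ) < t^k := Real.rpow_pos_of_pos ht0 k
    have hC : C = B / phik k t + A + ν^2 * A / (phik k t)^2 := by
      clear_value ν A B C
      field_simp
      linear_combination hbes
    have hphik : phik k t = t / t^k / (1-k) := by
      rw [phik, Real.rpow_sub ht0, Real.rpow_one]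
    have hP1 : t^((1+μ)/2 - 1) = t^((1+μ)/2) / t := by
      rw [Real.rpow_sub ht0, Real.rpow_one]
    have hP2 : t^((1+μ)/2 - 2) = t^((1+μ)/2) / t / t := by
      rw [show (1+μ)/2 - 2 = (1+μ)/2 - 1 - 1 by ring, Real.rpow_sub ht0,
        Real.rpow_sub ht0, Real.rpow_one]
    have hPk : t^((1+μ)/2 - k) = t^((1+μ)/2) / t^k := by
      rw [Real.rpow_sub ht0]
    have hP1k : t^((1+μ)/2 - 1 - k) = t^((1+μ)/2) / t / t^k := by
      rw [Real.rpow_sub ht0, Real.rpow_sub ht0, Real.rpow_one]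
    have hPk1 : t^((1+μ)/2 - k - 1) = t^((1+μ)/2) / t^k / t := by
      rw [Real.rpow_sub ht0, Real.rpow_sub ht0, Real.rpow_one]
    have hP2k : t^((1+μ)/2 - 2*k) = t^((1+μ)/2) / t^k / t^k := by
      rw [show (1+μ)/2 - 2*k = (1+μ)/2 - k - k by ring, Real.rpow_sub ht0,
        Real.rpow_sub ht0]
    have hm2k : t^(-(2*k)) = 1 / t^k / t^k := by
      rw [show -(2*k) = (0:ℝ) - k - k by ring, Real.rpow_sub ht0,
        Real.rpow_sub ht0, Real.rpow_zero]
    rw [hC, hP1, hP2, hPk, hP1k, hPk1, hP2k, hm2k, hphik, hν]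
    field_simp
    ring
end

section
/- Let μ ≥ 0 and k ∈ [0,1). For all t ≥ 1 one has ρ'(t)/ρ(t) < μ/t; in particular ρ'(1)/ρ(1) < μ. -/
open MeasureTheory Real Set

private lemma aux_integrable (a : ℝ) {c : ℝ} (hc : 0 < c) :
    IntegrableOn (fun ζ : ℝ => Real.exp (a * ζ - c * Real.exp ζ)) (Set.Ioi 0) := by
  have h1 : IntegrableOn (fun ζ : ℝ => Real.exp ((a+1)^2/c) * Real.exp (-1 * ζ)) (Set.Ioi 0) :=
    (exp_neg_integrableOn_Ioi 0 one_pos).const_mul _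
  refine h1.mono' ?_ ?_
  · exact (Real.continuous_exp.comp (by continuity)).aestronglyMeasurable
  · filter_upwards [MeasureTheory.ae_restrict_mem measurableSet_Ioi] with ζ hζ
    have hζ0 : (0:ℝ) ≤ ζ := le_of_lt hζ
    rw [Real.norm_eq_abs, abs_of_pos (Real.exp_pos _), ← Real.exp_add]
    apply Real.exp_le_exp.2
    have hE : (1 + ζ/2)^2 ≤ Real.exp ζ := by
      have h := Real.add_one_le_exp (ζ/2)
      have : Real.exp (ζ/2) ^ 2 = Real.exp ζ := by
        rw [sq, ← Real.exp_add]; ring_nf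
      nlinarith
    have hKc : (a+1)^2/c * c = (a+1)^2 := div_mul_cancel₀ _ hc.ne'
    nlinarith [sq_nonneg (c*ζ - 2*(a+1)), mul_le_mul_of_nonneg_left hE hc.le,
      mul_pos hc hc, sq_nonneg (c*ζ)]

private lemma cosh_le_exp' {ζ : ℝ} (hζ : 0 ≤ ζ) : Real.cosh ζ ≤ Real.exp ζ := by
  rw [Real.cosh_eq]
  have h := Real.exp_le_exp.2 (neg_le_self hζ)
  linarith

private lemma cosh_mul_le {ζ : ℝ} (ν : ℝ) (hζ : 0 ≤ ζ) :
    Real.cosh (ν * ζ) ≤ Real.exp (|ν| * ζ) := by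
  rw [← Real.cosh_abs, abs_mul, abs_of_nonneg hζ]
  exact cosh_le_exp' (by positivity)

private lemma exp_cosh_le {ζ s : ℝ} (hs : 0 ≤ s) :
    Real.exp (-s * Real.cosh ζ) ≤ Real.exp (-(s/2) * Real.exp ζ) := by
  apply Real.exp_le_exp.2
  have h : Real.exp ζ / 2 ≤ Real.cosh ζ := by
    rw [Real.cosh_eq]; linarith [Real.exp_pos (-ζ)]
  nlinarith

private lemma prod_bound (ν : ℝ) {s ζ : ℝ} (hs : 0 ≤ s) (hζ : 0 ≤ ζ) :
    Real.cosh ζ * (Real.exp (-s * Real.cosh ζ) * Real.cosh (ν * ζ)) ≤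
      Real.exp ((|ν| + 1) * ζ - s/2 * Real.exp ζ) := by
  have h1 : Real.cosh ζ * (Real.exp (-s * Real.cosh ζ) * Real.cosh (ν * ζ)) ≤
      Real.exp ζ * (Real.exp (-(s/2) * Real.exp ζ) * Real.exp (|ν| * ζ)) := by
    apply mul_le_mul (cosh_le_exp' hζ) ?_ (by positivity) (Real.exp_pos _).le
    exact mul_le_mul (exp_cosh_le hs) (cosh_mul_le ν hζ) (Real.cosh_pos _).le
      (Real.exp_pos _).le
  calc _ ≤ _ := h1
  _ = Real.exp ((|ν| + 1) * ζ - s/2 * Real.exp ζ) := by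
      rw [← Real.exp_add, ← Real.exp_add]; ring_nf

private lemma integrable_f2 (ν : ℝ) {t : ℝ} (ht : 0 < t) :
    IntegrableOn
      (fun ζ : ℝ => Real.cosh ζ * (Real.exp (-t * Real.cosh ζ) * Real.cosh (ν * ζ)))
      (Set.Ioi 0) := by
  refine (aux_integrable (|ν|+1) (show (0:ℝ) < t/2 by linarith)).mono' ?_ ?_
  · exact (by continuity : Continuous fun ζ : ℝ =>
      Real.cosh ζ * (Real.exp (-t * Real.cosh ζ) * Real.cosh (ν * ζ))).aestronglyMeasurable
  · filter_upwards [MeasureTheory.ae_restrict_mem measurableSet_Ioi] with ζ hζ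
    rw [Real.norm_eq_abs, abs_of_nonneg (by positivity)]
    exact prod_bound ν ht.le (le_of_lt hζ)

private lemma integrable_f1 (ν : ℝ) {t : ℝ} (ht : 0 < t) :
    IntegrableOn
      (fun ζ : ℝ => Real.exp (-t * Real.cosh ζ) * Real.cosh (ν * ζ)) (Set.Ioi 0) := by
  refine (integrable_f2 ν ht).mono' ?_ ?_
  · exact (by continuity : Continuous fun ζ : ℝ =>
      Real.exp (-t * Real.cosh ζ) * Real.cosh (ν * ζ)).aestronglyMeasurable
  · filter_upwards with ζ
    rw [Real.norm_eq_abs, abs_of_nonneg (by positivity)]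
    nlinarith [Real.one_le_cosh ζ, mul_pos (Real.exp_pos (-t * Real.cosh ζ)) (Real.cosh_pos (ν * ζ))]

private lemma besselK_pos (ν : ℝ) {t : ℝ} (ht : 0 < t) : 0 < besselK ν t := by
  rw [besselK, setIntegral_pos_iff_support_of_nonneg_ae]
  · have hsub : Set.Ioi (0:ℝ) ⊆ Function.support
        fun ζ => Real.exp (-t * Real.cosh ζ) * Real.cosh (ν * ζ) := by
      intro ζ _
      exact (by positivity : (0:ℝ) < Real.exp (-t * Real.cosh ζ) * Real.cosh (ν * ζ)).ne'
    rw [Set.inter_eq_right.2 hsub, Real.volume_Ioi]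
    exact ENNReal.zero_lt_top
  · filter_upwards with ζ; positivity
  · exact integrable_f1 ν ht

private lemma besselK_hasDerivAt (ν : ℝ) {t : ℝ} (ht : 0 < t) :
    HasDerivAt (besselK ν)
      (∫ ζ in Set.Ioi (0:ℝ),
        -(Real.cosh ζ * (Real.exp (-t * Real.cosh ζ) * Real.cosh (ν * ζ)))) t := by
  have hmain := hasDerivAt_integral_of_dominated_loc_of_deriv_le
    (μ := volume.restrict (Set.Ioi 0)) (x₀ := t)
    (F := fun s ζ => Real.exp (-s * Real.cosh ζ) * Real.cosh (ν * ζ))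
    (F' := fun s ζ => -(Real.cosh ζ * (Real.exp (-s * Real.cosh ζ) * Real.cosh (ν * ζ))))
    (bound := fun ζ => Real.exp ((|ν| + 1) * ζ - t/2/2 * Real.exp ζ))
    (Metric.ball_mem_nhds t (show (0:ℝ) < t/2 by linarith))
    (Filter.Eventually.of_forall fun s =>
      (by continuity : Continuous fun ζ : ℝ =>
        Real.exp (-s * Real.cosh ζ) * Real.cosh (ν * ζ)).aestronglyMeasurable)
    (integrable_f1 ν ht)
    ((by continuity : Continuous fun ζ : ℝ =>
      -(Real.cosh ζ * (Real.exp (-t * Real.cosh ζ) * Real.cosh (ν * ζ)))).aestronglyMeasurable)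
    ?_ ?_ ?_
  · exact hmain.2
  · filter_upwards [MeasureTheory.ae_restrict_mem measurableSet_Ioi] with ζ hζ
    intro s hs
    rw [Metric.mem_ball, Real.dist_eq, abs_lt] at hs
    have hs2 : t/2 ≤ s := by linarith [hs.1]
    rw [norm_neg, Real.norm_eq_abs, abs_of_nonneg (by positivity)]
    calc Real.cosh ζ * (Real.exp (-s * Real.cosh ζ) * Real.cosh (ν * ζ))
        ≤ Real.exp ((|ν| + 1) * ζ - s/2 * Real.exp ζ) :=
          prod_bound ν (by linarith) (le_of_lt hζ)
      _ ≤ Real.exp ((|ν| + 1) * ζ - t/2/2 * Real.exp ζ) := by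
          apply Real.exp_le_exp.2
          have := Real.exp_pos ζ
          nlinarith
  · exact (aux_integrable (|ν|+1) (by linarith : (0:ℝ) < t/2/2))
  · filter_upwards with ζ
    intro s _
    have h : HasDerivAt (fun s : ℝ => Real.exp (-s * Real.cosh ζ) * Real.cosh (ν * ζ))
        ((Real.exp (-s * Real.cosh ζ) * ((-1) * Real.cosh ζ)) * Real.cosh (ν * ζ)) s := by
      exact (((hasDerivAt_id s).neg.mul_const (Real.cosh ζ)).exp).mul_const _
    refine h.congr_deriv ?_
    ring

private lemma key_neg (ν φ : ℝ) (hφ : 0 < φ) (hsum : 0 < φ + ν) :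
    φ * (∫ ζ in Set.Ioi (0:ℝ),
        -(Real.cosh ζ * (Real.exp (-φ * Real.cosh ζ) * Real.cosh (ν * ζ))))
      - ν * besselK ν φ < 0 := by
  have h2 := integrable_f2 ν hφ
  have h1 := integrable_f1 ν hφ
  have hpos : 0 < ∫ ζ in Set.Ioi (0:ℝ),
      (φ * (Real.cosh ζ * (Real.exp (-φ * Real.cosh ζ) * Real.cosh (ν * ζ)))
        + ν * (Real.exp (-φ * Real.cosh ζ) * Real.cosh (ν * ζ))) := by
    rw [setIntegral_pos_iff_support_of_nonneg_ae]
    · have hsub : Set.Ioi (0:ℝ) ⊆ Function.support fun ζ =>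
          φ * (Real.cosh ζ * (Real.exp (-φ * Real.cosh ζ) * Real.cosh (ν * ζ)))
            + ν * (Real.exp (-φ * Real.cosh ζ) * Real.cosh (ν * ζ)) := by
        intro ζ _
        have key : (0:ℝ) < (φ * Real.cosh ζ + ν) *
            (Real.exp (-φ * Real.cosh ζ) * Real.cosh (ν * ζ)) := by
          apply mul_pos ?_ (by positivity)
          nlinarith [Real.one_le_cosh ζ]
        have : φ * (Real.cosh ζ * (Real.exp (-φ * Real.cosh ζ) * Real.cosh (ν * ζ)))
            + ν * (Real.exp (-φ * Real.cosh ζ) * Real.cosh (ν * ζ))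
            = (φ * Real.cosh ζ + ν) * (Real.exp (-φ * Real.cosh ζ) * Real.cosh (ν * ζ)) := by
          ring
        rw [Function.mem_support, this]
        exact key.ne'
      rw [Set.inter_eq_right.2 hsub, Real.volume_Ioi]
      exact ENNReal.zero_lt_top
    · filter_upwards [MeasureTheory.ae_restrict_mem measurableSet_Ioi] with ζ _
      have : (0:ℝ) ≤ (φ * Real.cosh ζ + ν) *
          (Real.exp (-φ * Real.cosh ζ) * Real.cosh (ν * ζ)) := by
        apply mul_nonneg ?_ (by positivity)
        nlinarith [Real.one_le_cosh ζ]
      show (0:ℝ) ≤ _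
      nlinarith
    · exact (h2.const_mul φ).add (h1.const_mul ν)
  have heq : φ * (∫ ζ in Set.Ioi (0:ℝ),
        -(Real.cosh ζ * (Real.exp (-φ * Real.cosh ζ) * Real.cosh (ν * ζ))))
      - ν * besselK ν φ
      = -∫ ζ in Set.Ioi (0:ℝ),
        (φ * (Real.cosh ζ * (Real.exp (-φ * Real.cosh ζ) * Real.cosh (ν * ζ)))
          + ν * (Real.exp (-φ * Real.cosh ζ) * Real.cosh (ν * ζ))) := by
    rw [besselK, MeasureTheory.integral_add (h2.const_mul φ) (h1.const_mul ν),
      MeasureTheory.integral_neg, MeasureTheory.integral_const_mul,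
      MeasureTheory.integral_const_mul]
    ring
  rw [heq]
  linarith

/-- For all `t ≥ 1`, `ρ'(t)/ρ(t) < μ/t`; in particular `ρ'(1)/ρ(1) < μ`. -/
theorem rho_log_deriv_lt (μ k : ℝ) (hμ : 0 ≤ μ) (hk0 : 0 ≤ k) (hk1 : k < 1) :
    (∀ t : ℝ, 1 ≤ t → deriv (rho μ k) t / rho μ k t < μ / t) ∧
    deriv (rho μ k) 1 / rho μ k 1 < μ := by
  have hk : (0:ℝ) < 1 - k := by linarith
  have main : ∀ t : ℝ, 1 ≤ t → deriv (rho μ k) t / rho μ k t < μ / t := by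
    intro t ht
    have ht0 : (0:ℝ) < t := by linarith
    set ν : ℝ := (μ - 1) / (2 * (1 - k)) with hν
    set φ : ℝ := phik k t with hφdef
    have htk : (1:ℝ) ≤ t ^ (1 - k) := by
      calc (1:ℝ) = 1 ^ (1 - k) := (Real.one_rpow _).symm
      _ ≤ t ^ (1 - k) := Real.rpow_le_rpow zero_le_one ht hk.le
    have hφ : 0 < φ := by
      rw [hφdef, phik]; positivity
    have hφ' : 1 / (1 - k) ≤ φ := by
      rw [hφdef, phik]; gcongr
    have hνlb : -1 / (2 * (1 - k)) ≤ ν := by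
      rw [hν]; gcongr; linarith
    have hsum : 0 < φ + ν := by
      have he : 1 / (1 - k) + -1 / (2 * (1 - k)) = 1 / (2 * (1 - k)) := by
        field_simp; ring
      have hp : (0:ℝ) < 1 / (2 * (1 - k)) := by positivity
      linarith
    set K : ℝ := besselK ν φ with hKdef
    set K' : ℝ := ∫ ζ in Set.Ioi (0:ℝ),
        -(Real.cosh ζ * (Real.exp (-φ * Real.cosh ζ) * Real.cosh (ν * ζ))) with hK'def
    have hK : 0 < K := besselK_pos ν hφ
    have hphi : HasDerivAt (phik k) (t ^ (-k)) t := by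
      have h := (Real.hasDerivAt_rpow_const (p := 1-k) (Or.inl ht0.ne')).div_const (1-k)
      have he : (1 - k) * t ^ (1 - k - 1) / (1 - k) = t ^ (-k) := by
        rw [mul_div_assoc, show (1 - k - 1 : ℝ) = -k by ring]
        field_simp
      rw [← he]
      exact h
    have hbes : HasDerivAt (besselK ν) K' φ := besselK_hasDerivAt ν hφ
    have hcomp : HasDerivAt (fun s => besselK ν (phik k s)) (K' * t ^ (-k)) t := by
      rw [hφdef] at hbes
      exact hbes.comp t hphi
    have hpow : HasDerivAt (fun s : ℝ => s ^ ((1 + μ) / 2))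
        ((1 + μ) / 2 * t ^ ((1 + μ) / 2 - 1)) t :=
      Real.hasDerivAt_rpow_const (Or.inl ht0.ne')
    have hrho : HasDerivAt (rho μ k)
        ((1 + μ) / 2 * t ^ ((1 + μ) / 2 - 1) * besselK ν (phik k t)
          + t ^ ((1 + μ) / 2) * (K' * t ^ (-k))) t := hpow.mul hcomp
    have hρ : rho μ k t = t ^ ((1 + μ) / 2) * K := by rw [rho, hKdef, hφdef]
    rw [hrho.deriv, hρ, div_lt_div_iff₀ (by positivity) ht0]
    have e1 : t ^ ((1 + μ) / 2 - 1) * t = t ^ ((1 + μ) / 2) := by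
      rw [← Real.rpow_add_one ht0.ne']; congr 1; ring
    have e2 : t ^ (-k : ℝ) * t = t ^ (1 - k) := by
      rw [← Real.rpow_add_one ht0.ne']; congr 1; ring
    have e3 : t ^ (1 - k) = (1 - k) * φ := by
      rw [hφdef, phik]; field_simp
    have hkey : φ * K' - ν * K < 0 := key_neg ν φ hφ hsum
    have htpow : (0:ℝ) < t ^ ((1 + μ) / 2) := Real.rpow_pos_of_pos ht0 _
    have h5 : t ^ ((1 + μ) / 2) * ((1 - k) * (φ * K' - ν * K)) < 0 :=
      mul_neg_of_pos_of_neg htpow (mul_neg_of_pos_of_neg hk hkey)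
    have hνk : (1 - k) * ν = (μ - 1) / 2 := by
      rw [hν]; field_simp
    have h6 : t ^ ((1 + μ) / 2) * ((1 - k) * (φ * K' - ν * K))
        = t ^ ((1 + μ) / 2) * K' * ((1 - k) * φ)
          - (μ - 1) / 2 * (t ^ ((1 + μ) / 2) * K) := by
      linear_combination (-(t ^ ((1 + μ) / 2) * K)) * hνk
    have hgoalL : ((1 + μ) / 2 * t ^ ((1 + μ) / 2 - 1) * besselK ν (phik k t)
          + t ^ ((1 + μ) / 2) * (K' * t ^ (-k))) * t
        = (1 + μ) / 2 * (t ^ ((1 + μ) / 2)) * K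
          + t ^ ((1 + μ) / 2) * K' * ((1 - k) * φ) := by
      rw [← hφdef, ← hKdef, ← e1, ← e3, ← e2]; ring
    rw [hgoalL]
    nlinarith [h5, h6]
  exact ⟨main, by simpa using main 1 le_rfl⟩
end
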